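/- arXiv:1004.4194 — 4 statements merged into one kernel-verified Lean document; each statement's English description precedes it below -/
import Mathlib

section
/- Let 𝓜 be a finite collection of d-dimensional polyhedra in R^n whose support Supp(𝓜) is convex. Then for every x ∈ Supp(𝓜) there exists ε > 0 such that for all δ with 0 < δ < ε, the set (Supp(𝓜) \ ∩_{d−2}(𝓜)) ∩ B_δ(x) is path connected. -/
open Set
open scoped Classical

/-- ℝⁿ as a Euclidean space. -/
abbrev Euc (n : ℕ) := EuclideanSpace ℝ (Fin n)

/-- A polyhedron: a nonempty intersection of finitely many closed halfspaces. -/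
def IsPolyhedron {n : ℕ} (P : Set (Euc n)) : Prop :=
  P.Nonempty ∧ ∃ I : Finset ((Euc n →ₗ[ℝ] ℝ) × ℝ),
    P = {x | ∀ h ∈ I, h.1 x ≤ h.2}

/-- `IsFace P F` : `F` is a face of the polyhedron `P`, i.e. `P` itself, the empty set,
or the intersection of `P` with a supporting hyperplane. -/
def IsFace {n : ℕ} (P F : Set (Euc n)) : Prop :=
  F = P ∨ F = ∅ ∨ ∃ (f : Euc n →ₗ[ℝ] ℝ) (c : ℝ), f ≠ 0 ∧
    (∀ x ∈ P, f x ≤ c) ∧ F = P ∩ {x | f x = c}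

/-- Dimension of a subset of ℝⁿ: `-1` for the empty set, otherwise the dimension
of its affine hull (the rank of its `vectorSpan`). -/
noncomputable def polyDim {n : ℕ} (S : Set (Euc n)) : ℤ :=
  if S = ∅ then -1 else (Module.finrank ℝ (vectorSpan ℝ S) : ℤ)

/-- All (nonempty) faces of members of a collection of polyhedra. -/
def withFaces {n : ℕ} (M : Set (Set (Euc n))) : Set (Set (Euc n)) :=
  {F | ∃ P ∈ M, IsFace P F ∧ F.Nonempty}

/-- A polyhedral complex: a finite nonempty collection of polyhedra, closed under
taking (nonempty) faces, in which the intersection of any two members is a face of each. -/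
def IsPolyhedralComplex {n : ℕ} (C : Set (Set (Euc n))) : Prop :=
  C.Finite ∧ C.Nonempty ∧ (∀ P ∈ C, IsPolyhedron P) ∧
  (∀ P ∈ C, ∀ F, IsFace P F → F.Nonempty → F ∈ C) ∧
  (∀ P ∈ C, ∀ Q ∈ C, IsFace P (P ∩ Q) ∧ IsFace Q (P ∩ Q))

/-- A pre-complex: a finite nonempty collection of polyhedra closed under taking faces. -/
def IsPreComplex {n : ℕ} (C : Set (Set (Euc n))) : Prop :=
  C.Finite ∧ C.Nonempty ∧ (∀ P ∈ C, IsPolyhedron P) ∧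
  (∀ P ∈ C, ∀ F, IsFace P F → F.Nonempty → F ∈ C)

/-- `∩ₖ(𝓜)`: the union of all intersections `P ∩ Q`, for `P, Q ∈ 𝓜`, of dimension at most `k`. -/
def interK {n : ℕ} (M : Set (Set (Euc n))) (k : ℤ) : Set (Euc n) :=
  {x | ∃ P ∈ M, ∃ Q ∈ M, x ∈ P ∩ Q ∧ polyDim (P ∩ Q) ≤ k}

/-! ### Hyperplane arrangements -/

/-- The affine hyperplane determined by a (nonzero) linear functional and a constant. -/
def Hyp {n : ℕ} (h : (Euc n →ₗ[ℝ] ℝ) × ℝ) : Set (Euc n) := {x | h.1 x = h.2}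

/-- A hyperplane arrangement: each datum determines a genuine hyperplane. -/
def IsArrangement {n : ℕ} (A : Finset ((Euc n →ₗ[ℝ] ℝ) × ℝ)) : Prop :=
  ∀ h ∈ A, h.1 ≠ 0

/-- The union of the hyperplanes of the arrangement. -/
def ArrUnion {n : ℕ} (A : Finset ((Euc n →ₗ[ℝ] ℝ) × ℝ)) : Set (Euc n) :=
  ⋃ h ∈ A, Hyp h

/-- A region of the arrangement: the closure of a connected component of the
complement of the union of the hyperplanes. -/
def IsRegion {n : ℕ} (A : Finset ((Euc n →ₗ[ℝ] ℝ) × ℝ)) (R : Set (Euc n)) : Prop :=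
  ∃ x, x ∉ ArrUnion A ∧ R = closure (connectedComponentIn (ArrUnion A)ᶜ x)

/-- Two regions are adjacent when their intersection has codimension 1. -/
def AdjacentReg {n : ℕ} (A : Finset ((Euc n →ₗ[ℝ] ℝ) × ℝ)) (Q R : Set (Euc n)) : Prop :=
  IsRegion A Q ∧ IsRegion A R ∧ Q ≠ R ∧ polyDim (Q ∩ R) = (n : ℤ) - 1

/-- The hyperplane `h` separates `Q` from `R`. -/
def Separates {n : ℕ} (h : (Euc n →ₗ[ℝ] ℝ) × ℝ) (Q R : Set (Euc n)) : Prop :=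
  ∃ x ∈ Q, ∃ y ∈ R, (h.1 x < h.2 ∧ h.2 < h.1 y) ∨ (h.1 y < h.2 ∧ h.2 < h.1 x)

/-- `S(Q,R)`: the set of hyperplanes of `A` separating `Q` from `R`. -/
def SepSet {n : ℕ} (A : Finset ((Euc n →ₗ[ℝ] ℝ) × ℝ)) (Q R : Set (Euc n)) :
    Set ((Euc n →ₗ[ℝ] ℝ) × ℝ) :=
  {h | h ∈ A ∧ Separates h Q R}

/-- A path of length `k` from `Q` to `R` in the adjacency graph of the arrangement. -/
def IsPathA {n : ℕ} (A : Finset ((Euc n →ₗ[ℝ] ℝ) × ℝ)) (γ : ℕ → Set (Euc n)) (k : ℕ)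
    (Q R : Set (Euc n)) : Prop :=
  γ 0 = Q ∧ γ k = R ∧ (∀ i, i ≤ k → IsRegion A (γ i)) ∧
  ∀ i, i < k → AdjacentReg A (γ i) (γ (i + 1))

/-- A reduced path: one of minimal length among all paths with the same endpoints. -/
def IsReducedPathA {n : ℕ} (A : Finset ((Euc n →ₗ[ℝ] ℝ) × ℝ)) (γ : ℕ → Set (Euc n)) (k : ℕ)
    (Q R : Set (Euc n)) : Prop :=
  IsPathA A γ k Q R ∧ ∀ γ' k', IsPathA A γ' k' Q R → k ≤ k'

/-- A codimension-2 face of the complex of the arrangement. -/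
def IsCodim2Face {n : ℕ} (A : Finset ((Euc n →ₗ[ℝ] ℝ) × ℝ)) (F : Set (Euc n)) : Prop :=
  ∃ R, IsRegion A R ∧ IsFace R F ∧ polyDim F = (n : ℤ) - 2

/-- The polygon of a codimension-2 face `F`: a cyclic arrangement (given as an
`m`-periodic sequence, injective on a period, with consecutive entries adjacent)
of all the regions containing `F`. -/
def IsPolygonCycleA {n : ℕ} (A : Finset ((Euc n →ₗ[ℝ] ℝ) × ℝ)) (F : Set (Euc n))
    (δ : ℕ → Set (Euc n)) (m : ℕ) : Prop :=
  3 ≤ m ∧ (∀ i, δ (i + m) = δ i) ∧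
  (∀ i j, i < m → j < m → δ i = δ j → i = j) ∧
  (∀ i, i < m → AdjacentReg A (δ i) (δ (i + 1))) ∧
  (∀ R, (∃ i, i < m ∧ δ i = R) ↔ (IsRegion A R ∧ F ⊆ R))

/-- A braid move on a path: replace a subpath `γ a, …, γ (a+m)` by another subpath with the
same endpoints, so that the two subpaths together form a polygon of some codimension-2 face. -/
def BraidMove {n : ℕ} (A : Finset ((Euc n →ₗ[ℝ] ℝ) × ℝ)) (γ : ℕ → Set (Euc n)) (k : ℕ)
    (γ' : ℕ → Set (Euc n)) (k' : ℕ) : Prop :=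
  k' = k ∧ ∃ a m, 0 < m ∧ a + m ≤ k ∧
    (∀ i, i ≤ a → γ' i = γ i) ∧ (∀ i, a + m ≤ i → γ' i = γ i) ∧
    ∃ F, IsCodim2Face A F ∧
      IsPolygonCycleA A F
        (fun i => if i % (2 * m) ≤ m then γ (a + i % (2 * m))
                  else γ' (a + 2 * m - i % (2 * m))) (2 * m)

/-- A nil move on a path: delete a subsequence `γ a, γ (a+1), γ (a+2)` with
`γ a = γ (a+2)`, replacing it by `γ a`. -/
def NilMove {n : ℕ} (γ : ℕ → Set (Euc n)) (k : ℕ) (γ' : ℕ → Set (Euc n)) (k' : ℕ) : Prop :=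
  ∃ a, a + 2 ≤ k ∧ γ (a + 2) = γ a ∧ k' + 2 = k ∧
    (∀ i, i ≤ a → γ' i = γ i) ∧ (∀ i, a < i → γ' i = γ (i + 2))

/-- One braid or nil move, as a relation on (path, length) pairs. -/
def BNMove {n : ℕ} (A : Finset ((Euc n →ₗ[ℝ] ℝ) × ℝ)) :
    ((ℕ → Set (Euc n)) × ℕ) → ((ℕ → Set (Euc n)) × ℕ) → Prop :=
  fun p q => BraidMove A p.1 p.2 q.1 q.2 ∨ NilMove p.1 p.2 q.1 q.2

/-- Path convexity: every path can be transformed into every reduced path with the same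
endpoints by a sequence of braid moves and nil moves. -/
def PathConvex {n : ℕ} (A : Finset ((Euc n →ₗ[ℝ] ℝ) × ℝ)) : Prop :=
  ∀ Q R γ k ρ l, IsPathA A γ k Q R → IsReducedPathA A ρ l Q R →
    ∃ σ : ℕ → Set (Euc n), Relation.ReflTransGen (BNMove A) (γ, k) (σ, l) ∧
      ∀ i, i ≤ l → σ i = ρ i

/-- Reduced-path connectivity: any two reduced paths with the same endpoints are related
by a sequence of braid moves. -/
def ReducedPathConnected {n : ℕ} (A : Finset ((Euc n →ₗ[ℝ] ℝ) × ℝ)) : Prop :=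
  ∀ Q R γ k ρ l, IsReducedPathA A γ k Q R → IsReducedPathA A ρ l Q R →
    ∃ σ : ℕ → Set (Euc n),
      Relation.ReflTransGen (fun p q => BraidMove A p.1 p.2 q.1 q.2) (γ, k) (σ, l) ∧
      ∀ i, i ≤ l → σ i = ρ i

/-! ### Complexes, coarsenings, polygon properties -/

/-- `F` is a face of the complex of the arrangement `A`. -/
def IsFaceOfArr {n : ℕ} (A : Finset ((Euc n →ₗ[ℝ] ℝ) × ℝ)) (F : Set (Euc n)) : Prop :=
  ∃ R, IsRegion A R ∧ IsFace R F

/-- `C` is a subcomplex of the complex `𝓒(A)` of the arrangement `A`. -/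
def IsSubcomplexOfArr {n : ℕ} (A : Finset ((Euc n →ₗ[ℝ] ℝ) × ℝ))
    (C : Set (Set (Euc n))) : Prop :=
  IsPolyhedralComplex C ∧ ∀ F ∈ C, IsFaceOfArr A F

/-- A complex is full-dimensional if every face lies in an `n`-dimensional face. -/
def FullDimensional {n : ℕ} (C : Set (Set (Euc n))) : Prop :=
  ∀ F ∈ C, ∃ M ∈ C, F ⊆ M ∧ polyDim M = (n : ℤ)

/-- Adjacency of two full-dimensional faces of a complex `C`. -/
def AdjacentIn {n : ℕ} (C : Set (Set (Euc n))) (M N : Set (Euc n)) : Prop :=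
  M ∈ C ∧ N ∈ C ∧ polyDim M = (n : ℤ) ∧ polyDim N = (n : ℤ) ∧
  M ≠ N ∧ polyDim (M ∩ N) = (n : ℤ) - 1

/-- The polygon, in the adjacency graph of the complex `C`, of a codimension-2 face `F`:
a cyclic arrangement of all the full-dimensional faces of `C` containing `F`. -/
def IsPolygonCycleC {n : ℕ} (C : Set (Set (Euc n))) (F : Set (Euc n))
    (δ : ℕ → Set (Euc n)) (m : ℕ) : Prop :=
  3 ≤ m ∧ (∀ i, δ (i + m) = δ i) ∧
  (∀ i j, i < m → j < m → δ i = δ j → i = j) ∧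
  (∀ i, i < m → AdjacentIn C (δ i) (δ (i + 1))) ∧
  (∀ M, (∃ i, i < m ∧ δ i = M) ↔ (M ∈ C ∧ polyDim M = (n : ℤ) ∧ F ⊆ M))

/-- `C'` coarsens `C`: `C'` is a polyhedral complex with the same support, each of
whose faces is a union of faces of `C`. -/
def Coarsens {n : ℕ} (C' C : Set (Set (Euc n))) : Prop :=
  IsPolyhedralComplex C' ∧ ⋃₀ C' = ⋃₀ C ∧ ∀ P ∈ C', ∃ S ⊆ C, P = ⋃₀ S

/-- `C'` is a pre-complex coarsening `C`. -/
def PreCoarsens {n : ℕ} (C' C : Set (Set (Euc n))) : Prop :=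
  IsPreComplex C' ∧ ⋃₀ C' = ⋃₀ C ∧ ∀ P ∈ C', ∃ S ⊆ C, P = ⋃₀ S

/-- `E` is the edge set of the coarsening `C'` of `C`: an edge `M — N` of the adjacency
graph of `C` is in `E` exactly when `M` and `N` lie in a common face of `C'`. -/
def IsEdgeSetOf {n : ℕ} (C C' : Set (Set (Euc n)))
    (E : Set (Euc n) → Set (Euc n) → Prop) : Prop :=
  ∀ M N, E M N ↔ (AdjacentIn C M N ∧ ∃ P ∈ C', M ⊆ P ∧ N ⊆ P)

/-- `Perp F`: the orthogonal complement of the direction of the affine hull of `F`. -/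
def PerpSet {n : ℕ} (F : Set (Euc n)) : Set (Euc n) :=
  ((vectorSpan ℝ F)ᗮ : Submodule ℝ (Euc n))

/-- The cone of directions `v` in `W` along which one enters `M` from `x`. -/
def ConeAt {n : ℕ} (x : Euc n) (W M : Set (Euc n)) : Set (Euc n) :=
  {v | v ∈ W ∧ ∃ ε : ℝ, 0 < ε ∧ x + ε • v ∈ M}

/-- The fan `C|_F` in `Perp F`: cones of the full-dimensional faces of `C` containing `F`,
together with all their faces. -/
def RestrFan {n : ℕ} (C : Set (Set (Euc n))) (F : Set (Euc n)) (x : Euc n) :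
    Set (Set (Euc n)) :=
  withFaces {K | ∃ M ∈ C, polyDim M = (n : ℤ) ∧ F ⊆ M ∧ K = ConeAt x (PerpSet F) M}

/-- A fan: a polyhedral complex all of whose faces contain the origin. -/
def IsFan {n : ℕ} (D : Set (Set (Euc n))) : Prop :=
  IsPolyhedralComplex D ∧ ∀ K ∈ D, (0 : Euc n) ∈ K

/-- The polygon property: for every codimension-2 face `F` of `C` not contained in the
boundary of the support, the restriction of `E` to the polygon of `F` is the edge set of a
fan in `Perp F` coarsening `C|_F`. -/
def PolygonProperty {n : ℕ} (C : Set (Set (Euc n)))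
    (E : Set (Euc n) → Set (Euc n) → Prop) : Prop :=
  ∀ F ∈ C, polyDim F = (n : ℤ) - 2 → ¬ F ⊆ frontier (⋃₀ C) →
  ∀ x ∈ intrinsicInterior ℝ F,
  ∃ D, IsFan D ∧ ⋃₀ D = PerpSet F ∧ Coarsens D (RestrFan C F x) ∧
    ∀ M N, AdjacentIn C M N → F ⊆ M → F ⊆ N →
      (E M N ↔ ∃ K ∈ D, ConeAt x (PerpSet F) M ⊆ K ∧ ConeAt x (PerpSet F) N ⊆ K)

/-- The weak polygon property (for subcomplexes of arrangements, where every polygon is a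
`2k`-gon): if `E` contains `k` consecutive edges of a `2k`-gon polygon, then it contains
all edges of that polygon. -/
def WeakPolygonPropertyC {n : ℕ} (C : Set (Set (Euc n)))
    (E : Set (Euc n) → Set (Euc n) → Prop) : Prop :=
  ∀ F ∈ C, polyDim F = (n : ℤ) - 2 → ¬ F ⊆ frontier (⋃₀ C) →
  ∀ δ m k, IsPolygonCycleC C F δ m → m = 2 * k →
  ∀ a, (∀ i, i < k → E (δ (a + i)) (δ (a + i + 1))) →
    ∀ i, E (δ i) (δ (i + 1))

/-- The (combinatorial) polygon property for subcomplexes of arrangements: if `E` contains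
`k - 1` consecutive edges of a `2k`-gon polygon, then it contains the opposite `k - 1`
consecutive edges. -/
def CombPolygonProperty {n : ℕ} (C : Set (Set (Euc n)))
    (E : Set (Euc n) → Set (Euc n) → Prop) : Prop :=
  ∀ F ∈ C, polyDim F = (n : ℤ) - 2 → ¬ F ⊆ frontier (⋃₀ C) →
  ∀ δ m k, IsPolygonCycleC C F δ m → m = 2 * k →
  ∀ a, (∀ i, i + 1 < k → E (δ (a + i)) (δ (a + i + 1))) →
    ∀ i, i + 1 < k → E (δ (a + k + i)) (δ (a + k + i + 1))

/-! ### Zonotopes -/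

/-- A zonotope: a Minkowski sum of finitely many segments. -/
def IsZonotope {n : ℕ} (Z : Set (Euc n)) : Prop :=
  ∃ (m : ℕ) (v : Fin m → Euc n),
    Z = {x | ∃ c : Fin m → ℝ, (∀ i, c i ∈ Icc (0 : ℝ) 1) ∧ x = ∑ i, c i • v i}

/-- The normal cone of a face `F` of `Z`. -/
def normalCone {n : ℕ} (Z F : Set (Euc n)) : Set (Euc n) :=
  {u | ∀ y ∈ Z, ∀ x ∈ F, (inner ℝ u y : ℝ) ≤ (inner ℝ u x : ℝ)}

/-- The normal fan of `Z`: the normal cones of the nonempty faces of `Z`. -/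
def normalFan {n : ℕ} (Z : Set (Euc n)) : Set (Set (Euc n)) :=
  {K | ∃ F, IsFace Z F ∧ F.Nonempty ∧ K = normalCone Z F}

/-- `e` is an edge of `Z` with endpoints `u` and `v`. -/
def IsEdgeOf {n : ℕ} (Z e : Set (Euc n)) (u v : Euc n) : Prop :=
  IsFace Z e ∧ u ≠ v ∧ e = segment ℝ u v

/-- A cyclic listing of the vertices of a two-dimensional face `P` of `Z`, so that
consecutive vertices span the edges of `P`. -/
def IsVertexCycle {n : ℕ} (Z P : Set (Euc n)) (p : ℕ → Euc n) (m : ℕ) : Prop :=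
  3 ≤ m ∧ (∀ i, p (i + m) = p i) ∧
  (∀ i j, i < m → j < m → p i = p j → i = j) ∧
  (∀ i, IsFace Z {p i}) ∧
  (∀ e, (IsFace P e ∧ polyDim e = 1) ↔ ∃ i, i < m ∧ e = segment ℝ (p i) (p (i + 1)))

/-- The zonotopal polygon property: if `𝓔` contains `k - 1` consecutive edges of a
`2k`-gonal 2-face of `Z`, it contains the opposite `k - 1` consecutive edges. -/
def ZonotopalPolygonProperty {n : ℕ} (Z : Set (Euc n)) (𝓔 : Set (Set (Euc n))) : Prop :=
  ∀ P, IsFace Z P → polyDim P = 2 →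
  ∀ p m k, IsVertexCycle Z P p m → m = 2 * k →
  ∀ a, (∀ i, i + 1 < k → segment ℝ (p (a + i)) (p (a + i + 1)) ∈ 𝓔) →
    ∀ i, i + 1 < k → segment ℝ (p (a + k + i)) (p (a + k + i + 1)) ∈ 𝓔


section AuxLemmas

open Metric

private lemma vectorSpan_le_inter_ball {n : ℕ} {C : Set (Euc n)} (hC : Convex ℝ C) {x : Euc n}
    (hx : x ∈ C) {δ : ℝ} (hδ : 0 < δ) :
    vectorSpan ℝ C ≤ vectorSpan ℝ (C ∩ Metric.ball x δ) := by
  have hx' : x ∈ C ∩ Metric.ball x δ := ⟨hx, Metric.mem_ball_self hδ⟩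
  rw [vectorSpan_eq_span_vsub_set_right ℝ hx]
  refine Submodule.span_le.2 ?_
  rintro _ ⟨y, hy, rfl⟩
  by_cases hyx : y = x
  · simp [hyx]
  · have hnorm : (0:ℝ) < ‖y - x‖ := by
      rw [norm_pos_iff, sub_ne_zero]; exact hyx
    set t : ℝ := min 1 (δ / (2 * ‖y - x‖)) with ht
    have ht0 : 0 < t := lt_min one_pos (by positivity)
    have ht1 : t ≤ 1 := min_le_left _ _
    have hz : x + t • (y - x) ∈ C := by
      have h := hC hx hy (by linarith : (0:ℝ) ≤ 1 - t) ht0.le (by ring)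
      convert h using 1
      module
    have hzb : x + t • (y - x) ∈ Metric.ball x δ := by
      rw [Metric.mem_ball, dist_eq_norm]
      have he : x + t • (y - x) - x = t • (y - x) := by abel
      rw [he, norm_smul, Real.norm_eq_abs, abs_of_pos ht0]
      calc t * ‖y - x‖ ≤ (δ / (2 * ‖y - x‖)) * ‖y - x‖ :=
            mul_le_mul_of_nonneg_right (min_le_right _ _) (norm_nonneg _)
        _ = δ / 2 := by field_simp
        _ < δ := by linarith
    have hmem : (x + t • (y - x)) -ᵥ x ∈ vectorSpan ℝ (C ∩ Metric.ball x δ) :=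
      vsub_mem_vectorSpan ℝ ⟨hz, hzb⟩ hx'
    have heq : (x + t • (y - x)) -ᵥ x = t • (y - x) := by
      simp [vsub_eq_sub]
    rw [heq] at hmem
    have hy' : y -ᵥ x = t⁻¹ • (t • (y - x)) := by
      rw [smul_smul, inv_mul_cancel₀ ht0.ne', one_smul, vsub_eq_sub]
    show y -ᵥ x ∈ (vectorSpan ℝ (C ∩ Metric.ball x δ) : Set (Euc n))
    rw [hy']
    exact Submodule.smul_mem _ _ hmem

private lemma exists_relint {n : ℕ} {D : Set (Euc n)} (hD : Convex ℝ D) (hne : D.Nonempty) :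
    ∃ p ∈ D, ∃ η : ℝ, 0 < η ∧ ∀ w ∈ vectorSpan ℝ D, ‖w‖ < η → p + w ∈ D := by
  obtain ⟨p, hp⟩ := hne.intrinsicInterior hD
  rw [intrinsicInterior] at hp
  obtain ⟨q, hq, rfl⟩ := hp
  rw [mem_interior_iff_mem_nhds, Metric.mem_nhds_iff] at hq
  obtain ⟨η, hη, hball⟩ := hq
  refine ⟨q, hball (Metric.mem_ball_self hη), η, hη, ?_⟩
  intro w hw hwn
  have hmem : (q : Euc n) + w ∈ affineSpan ℝ D := by
    have h := AffineSubspace.vadd_mem_of_mem_direction (s := affineSpan ℝ D)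
      (by rwa [direction_affineSpan] : w ∈ (affineSpan ℝ D).direction) q.2
    simpa [vadd_eq_add, add_comm] using h
  have hb : (⟨(q : Euc n) + w, hmem⟩ : affineSpan ℝ D) ∈ Metric.ball q η := by
    rw [Metric.mem_ball, Subtype.dist_eq, dist_eq_norm]
    simpa using hwn
  exact hball hb

private lemma line_subsingleton {n : ℕ} {T : AffineSubspace ℝ (Euc n)} {v p : Euc n}
    (hv : v ∉ T.direction) : {t : ℝ | p + t • v ∈ T}.Subsingleton := by
  intro t1 h1 t2 h2
  by_contra hne
  apply hv
  have hd : (p + t1 • v) -ᵥ (p + t2 • v) ∈ T.direction :=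
    AffineSubspace.vsub_mem_direction h1 h2
  have heq : (p + t1 • v) -ᵥ (p + t2 • v) = (t1 - t2) • v := by
    rw [vsub_eq_sub]; module
  rw [heq] at hd
  have h := T.direction.smul_mem (t1 - t2)⁻¹ hd
  rwa [smul_smul, inv_mul_cancel₀ (sub_ne_zero.2 hne), one_smul] at h

private lemma exists_avoid {n : ℕ} (W : Submodule ℝ (Euc n))
    (𝒰 : Set (Submodule ℝ (Euc n))) (hfin : 𝒰.Finite) :
    (∀ U ∈ 𝒰, ¬ W ≤ U) → ∃ v ∈ W, ∀ U ∈ 𝒰, v ∉ U := by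
  refine Set.Finite.induction_on 𝒰 hfin
    (motive := fun 𝒰 _ => (∀ U ∈ 𝒰, ¬ W ≤ U) → ∃ v ∈ W, ∀ U ∈ 𝒰, v ∉ U)
    (fun _ => ⟨0, W.zero_mem, fun U hU => absurd hU (Set.notMem_empty U)⟩) ?_
  rintro U0 𝒰' hU0 hfin' ih h
  obtain ⟨v, hvW, hv⟩ := ih fun U hU => h U (Set.mem_insert_of_mem _ hU)
  obtain ⟨u, huW, hu0⟩ := SetLike.not_le_iff_exists.1 (h U0 (Set.mem_insert _ _))
  have hfinbad : ({t : ℝ | v + t • u ∈ U0} ∪ ⋃ U ∈ 𝒰', {t : ℝ | v + t • u ∈ U}).Finite := by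
    refine Set.Finite.union ?_ (Set.Finite.biUnion hfin' fun U hU => ?_)
    · refine Set.Subsingleton.finite fun t1 h1 t2 h2 => ?_
      by_contra hne
      refine hu0 ?_
      have hs : (t1 - t2) • u ∈ U0 := by
        have h' := U0.sub_mem h1 h2
        convert h' using 1; module
      have h'' := U0.smul_mem (t1 - t2)⁻¹ hs
      rwa [smul_smul, inv_mul_cancel₀ (sub_ne_zero.2 hne), one_smul] at h''
    · refine Set.Subsingleton.finite fun t1 h1 t2 h2 => ?_
      by_contra hne
      have hu : u ∈ U := by
        have hs : (t1 - t2) • u ∈ U := by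
          have h' := U.sub_mem h1 h2
          convert h' using 1; module
        have h'' := U.smul_mem (t1 - t2)⁻¹ hs
        rwa [smul_smul, inv_mul_cancel₀ (sub_ne_zero.2 hne), one_smul] at h''
      refine hv U hU ?_
      have h' := U.sub_mem h1 (U.smul_mem t1 hu)
      simpa using h'
  obtain ⟨t, ht⟩ := hfinbad.infinite_compl.nonempty
  refine ⟨v + t • u, W.add_mem hvW (W.smul_mem _ huW), ?_⟩
  intro U hU' hmem
  rcases Set.mem_insert_iff.1 hU' with rfl | hU'
  · exact ht (Set.mem_union_left _ hmem)
  · exact ht (Set.mem_union_right _ (Set.mem_biUnion hU' hmem))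

end AuxLemmas

/-- for a finite collection of `d`-dimensional polyhedra with convex support,
removing `∩_{d-2}(𝓜)` leaves locally path-connected neighborhoods. -/
theorem local_path_connected_of_convex_support {n : ℕ} (d : ℕ) (M : Set (Set (Euc n)))
    (hfin : M.Finite)
    (hpoly : ∀ P ∈ M, IsPolyhedron P ∧ polyDim P = (d : ℤ))
    (hconv : Convex ℝ (⋃₀ M)) :
    ∀ x ∈ ⋃₀ M, ∃ ε : ℝ, 0 < ε ∧ ∀ δ : ℝ, 0 < δ → δ < ε →
      IsPathConnected ((⋃₀ M \ interK M ((d : ℤ) - 2)) ∩ Metric.ball x δ) := by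
  intro x hx
  refine ⟨1, one_pos, ?_⟩
  intro δ hδ _
  classical
  set C : Set (Euc n) := ⋃₀ M with hCdef
  set K : Set (Euc n) := interK M ((d:ℤ) - 2) with hKdef
  set D : Set (Euc n) := C ∩ Metric.ball x δ with hDdef
  have hDconv : Convex ℝ D := hconv.inter (convex_ball x δ)
  have hxD : x ∈ D := ⟨hx, Metric.mem_ball_self hδ⟩
  -- the finitely many "bad" intersections
  set Bad : Set (Set (Euc n)) :=
    {E | E.Nonempty ∧ polyDim E ≤ (d:ℤ) - 2 ∧ ∃ P ∈ M, ∃ Q ∈ M, E = P ∩ Q} with hBaddef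
  have hBadfin : Bad.Finite := by
    refine Set.Finite.subset (Set.Finite.image2 (· ∩ ·) hfin hfin) ?_
    rintro E ⟨-, -, P, hP, Q, hQ, rfl⟩
    exact Set.mem_image2_of_mem hP hQ
  have hKsub : ∀ y ∈ K, ∃ E ∈ Bad, y ∈ E := by
    rintro y hyK
    obtain ⟨P, hP, Q, hQ, hy, hdim⟩ := hyK
    exact ⟨P ∩ Q, ⟨⟨y, hy⟩, hdim, P, hP, Q, hQ, rfl⟩, hy⟩
  have hdimE : ∀ E ∈ Bad, ∀ z : Euc n,
      (Module.finrank ℝ (vectorSpan ℝ (insert z E)) : ℤ) < (d : ℤ) := by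
    rintro E ⟨hEne, hEdim, -⟩ z
    have h1 : (Module.finrank ℝ (vectorSpan ℝ E) : ℤ) ≤ (d:ℤ) - 2 := by
      simp only [polyDim] at hEdim
      rwa [if_neg hEne.ne_empty] at hEdim
    have h2 := finrank_vectorSpan_insert_le_set ℝ E z
    omega
  have hWd : (d : ℤ) ≤ (Module.finrank ℝ (vectorSpan ℝ D) : ℤ) := by
    obtain ⟨P, hP, hxP⟩ := hx
    obtain ⟨⟨hPne, IP, hIP⟩, hPd⟩ := hpoly P hP
    have hPconv : Convex ℝ P := by
      rw [hIP]
      have he : {y : Euc n | ∀ h ∈ IP, h.1 y ≤ h.2} = ⋂ h ∈ IP, {y | h.1 y ≤ h.2} := by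
        ext y; simp
      rw [he]
      exact convex_iInter fun h => convex_iInter fun _ =>
        convex_halfSpace_le (LinearMap.isLinear h.1) h.2
    have hle : vectorSpan ℝ P ≤ vectorSpan ℝ D :=
      le_trans (vectorSpan_le_inter_ball hPconv hxP hδ)
        (vectorSpan_mono ℝ (Set.inter_subset_inter_left _ (Set.subset_sUnion_of_mem hP)))
    have hfr : (Module.finrank ℝ (vectorSpan ℝ P) : ℤ) = (d : ℤ) := by
      simp only [polyDim] at hPd
      rwa [if_neg hPne.ne_empty] at hPd
    have hmono := Submodule.finrank_mono hle
    omega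
  obtain ⟨p, hpD, η, hηpos, hpball⟩ := exists_relint hDconv ⟨x, hxD⟩
  -- key construction: a point of D avoiding all affine spans through two reference points
  have key : ∀ a b : Euc n, ∃ c ∈ D, ∀ E ∈ Bad,
      c ∉ affineSpan ℝ (insert a E) ∧ c ∉ affineSpan ℝ (insert b E) := by
    intro a b
    set 𝒰 : Set (Submodule ℝ (Euc n)) :=
      ((fun E => vectorSpan ℝ (insert a E)) '' Bad) ∪
      ((fun E => vectorSpan ℝ (insert b E)) '' Bad) with h𝒰def
    have h𝒰fin : 𝒰.Finite := (hBadfin.image _).union (hBadfin.image _)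
    have h𝒰 : ∀ U ∈ 𝒰, ¬ vectorSpan ℝ D ≤ U := by
      rintro U hU hle
      rcases hU with ⟨E, hE, rfl⟩ | ⟨E, hE, rfl⟩
      · have h1 := hdimE E hE a
        have h2 : Module.finrank ℝ (vectorSpan ℝ D) ≤
            Module.finrank ℝ (vectorSpan ℝ (insert a E)) := Submodule.finrank_mono hle
        omega
      · have h1 := hdimE E hE b
        have h2 : Module.finrank ℝ (vectorSpan ℝ D) ≤
            Module.finrank ℝ (vectorSpan ℝ (insert b E)) := Submodule.finrank_mono hle
        omega
    obtain ⟨v, hvW, hv⟩ := exists_avoid (vectorSpan ℝ D) 𝒰 h𝒰fin h𝒰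
    set badT : Set ℝ := ⋃ E ∈ Bad,
      ({t : ℝ | p + t • v ∈ affineSpan ℝ (insert a E)} ∪
       {t : ℝ | p + t • v ∈ affineSpan ℝ (insert b E)}) with hbadTdef
    have hbadfin : badT.Finite := by
      refine Set.Finite.biUnion hBadfin fun E hE => Set.Finite.union ?_ ?_
      · refine Set.Subsingleton.finite (line_subsingleton ?_)
        rw [direction_affineSpan]
        exact hv _ (Set.mem_union_left _ ⟨E, hE, rfl⟩)
      · refine Set.Subsingleton.finite (line_subsingleton ?_)
        rw [direction_affineSpan]
        exact hv _ (Set.mem_union_right _ ⟨E, hE, rfl⟩)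
    have hIoo : (Set.Ioo (0:ℝ) (η / (‖v‖ + 1))).Infinite :=
      Set.Ioo_infinite (by positivity)
    obtain ⟨t, htI, htbad⟩ := (hIoo.diff hbadfin).nonempty
    refine ⟨p + t • v, ?_, ?_⟩
    · refine hpball _ (Submodule.smul_mem _ _ hvW) ?_
      rw [norm_smul, Real.norm_eq_abs, abs_of_pos htI.1]
      have hlt := htI.2
      rw [lt_div_iff₀ (by positivity : (0:ℝ) < ‖v‖ + 1)] at hlt
      nlinarith [htI.1, norm_nonneg v]
    · intro E hE
      constructor
      · intro hmem
        exact htbad (Set.mem_biUnion hE (Set.mem_union_left _ hmem))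
      · intro hmem
        exact htbad (Set.mem_biUnion hE (Set.mem_union_right _ hmem))
  -- segments towards such a point avoid K
  have segK : ∀ a : Euc n, a ∉ K → ∀ c : Euc n,
      (∀ E ∈ Bad, c ∉ affineSpan ℝ (insert a E)) → ∀ y ∈ segment ℝ a c, y ∉ K := by
    intro a haK c hc y hy hyK
    obtain ⟨E, hE, hyE⟩ := hKsub y hyK
    rw [segment_eq_image'] at hy
    obtain ⟨s, hs, rfl⟩ := hy
    rcases eq_or_lt_of_le hs.1 with hs0 | hs0
    · refine haK ?_
      rw [← hs0] at hyK
      simpa using hyK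
    · refine hc E hE ?_
      have haT : a ∈ affineSpan ℝ (insert a E) :=
        subset_affineSpan ℝ _ (Set.mem_insert a E)
      have hyT : a + s • (c - a) ∈ affineSpan ℝ (insert a E) :=
        subset_affineSpan ℝ _ (Set.mem_insert_of_mem _ hyE)
      have hdir : (c - a) ∈ (affineSpan ℝ (insert a E)).direction := by
        have h1 := AffineSubspace.vsub_mem_direction hyT haT
        have h2 : (a + s • (c - a)) -ᵥ a = s • (c - a) := by
          rw [vsub_eq_sub]; abel
        rw [h2] at h1
        have h3 := (affineSpan ℝ (insert a E)).direction.smul_mem s⁻¹ h1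
        rwa [smul_smul, inv_mul_cancel₀ hs0.ne', one_smul] at h3
      have h4 := AffineSubspace.vadd_mem_of_mem_direction hdir haT
      simpa [vadd_eq_add, sub_add_cancel] using h4
  have hnotK : ∀ c : Euc n, ∀ a b : Euc n,
      (∀ E ∈ Bad, c ∉ affineSpan ℝ (insert a E) ∧ c ∉ affineSpan ℝ (insert b E)) → c ∉ K := by
    intro c a b hc hcK
    obtain ⟨E, hE, hcE⟩ := hKsub c hcK
    exact (hc E hE).1 (subset_affineSpan ℝ _ (Set.mem_insert_of_mem _ hcE))
  have hSeq : (C \ K) ∩ Metric.ball x δ = D \ K := by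
    ext y
    constructor
    · rintro ⟨⟨h1, h2⟩, h3⟩; exact ⟨⟨h1, h3⟩, h2⟩
    · rintro ⟨⟨h1, h3⟩, h2⟩; exact ⟨⟨h1, h2⟩, h3⟩
  rw [hSeq, isPathConnected_iff]
  constructor
  · obtain ⟨c, hcD, hc⟩ := key x x
    exact ⟨c, hcD, hnotK c x x hc⟩
  · rintro a ⟨haD, haK⟩ b ⟨hbD, hbK⟩
    obtain ⟨c, hcD, hc⟩ := key a b
    have hseg1 : segment ℝ a c ⊆ D \ K := fun y hy =>
      ⟨hDconv.segment_subset haD hcD hy, segK a haK c (fun E hE => (hc E hE).1) y hy⟩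
    have hseg2 : segment ℝ b c ⊆ D \ K := fun y hy =>
      ⟨hDconv.segment_subset hbD hcD hy, segK b hbK c (fun E hE => (hc E hE).2) y hy⟩
    have j1 : JoinedIn (D \ K) a c :=
      (((convex_segment a c).isPathConnected ⟨a, left_mem_segment ℝ a c⟩).joinedIn a
        (left_mem_segment ℝ a c) c (right_mem_segment ℝ a c)).mono hseg1
    have j2 : JoinedIn (D \ K) b c :=
      (((convex_segment b c).isPathConnected ⟨b, left_mem_segment ℝ b c⟩).joinedIn b
        (left_mem_segment ℝ b c) c (right_mem_segment ℝ b c)).mono hseg2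
    exact j1.trans j2.symm
end

section
/- Let 𝓒 be a polyhedral complex in R^n whose support is full-dimensional and convex. Then every face of 𝓒 that is maximal with respect to inclusion is n-dimensional. -/
open Set
open scoped Classical

/-- A polyhedron is closed. -/
lemma IsPolyhedron.isClosed {n : ℕ} {P : Set (Euc n)} (h : IsPolyhedron P) :
    IsClosed P := by
  obtain ⟨-, I, rfl⟩ := h
  have : {x : Euc n | ∀ h ∈ I, h.1 x ≤ h.2} = ⋂ h ∈ I, {x | h.1 x ≤ h.2} := by
    ext x; simp
  rw [this]
  exact isClosed_biInter fun h _ =>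
    isClosed_le h.1.continuous_of_finiteDimensional continuous_const

/-- A polyhedron is convex. -/
lemma IsPolyhedron.convex {n : ℕ} {P : Set (Euc n)} (h : IsPolyhedron P) :
    Convex ℝ P := by
  obtain ⟨-, I, rfl⟩ := h
  intro a ha b hb s t hs ht hst
  intro g hg
  have h1 := ha g hg
  have h2 := hb g hg
  simp only [map_add, map_smul, smul_eq_mul]
  calc s * g.1 a + t * g.1 b ≤ s * g.2 + t * g.2 :=
        add_le_add (mul_le_mul_of_nonneg_left h1 hs) (mul_le_mul_of_nonneg_left h2 ht)
    _ = g.2 := by rw [← add_mul, hst, one_mul]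

/-- From an intrinsic-interior point one can move a bit past any point of the set. -/
lemma relint_extend {n : ℕ} {F : Set (Euc n)} {x y : Euc n}
    (hx : x ∈ intrinsicInterior ℝ F) (hy : y ∈ F) :
    ∃ s : ℝ, 0 < s ∧ x + s • (x - y) ∈ F := by
  obtain ⟨x', hx', hxx⟩ := hx
  rw [mem_interior_iff_mem_nhds, Metric.mem_nhds_iff] at hx'
  obtain ⟨δ, hδ, hball⟩ := hx'
  set s : ℝ := δ / (2 * (‖x - y‖ + 1)) with hs
  have hspos : 0 < s := div_pos hδ (by positivity)
  refine ⟨s, hspos, ?_⟩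
  have hxspan : x ∈ affineSpan ℝ F := by rw [← hxx]; exact x'.2
  have hyspan : y ∈ affineSpan ℝ F := subset_affineSpan ℝ F hy
  have hz : x + s • (x - y) ∈ affineSpan ℝ F := by
    have := AffineSubspace.smul_vsub_vadd_mem (affineSpan ℝ F) s hxspan hyspan hxspan
    simpa [vsub_eq_sub, vadd_eq_add, add_comm] using this
  have hmem : (⟨x + s • (x - y), hz⟩ : affineSpan ℝ F) ∈ Metric.ball x' δ := by
    rw [Metric.mem_ball, Subtype.dist_eq, hxx]
    have : dist (x + s • (x - y)) x = s * ‖x - y‖ := by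
      rw [dist_eq_norm]
      simp [norm_smul, abs_of_pos hspos]
    rw [this, hs, div_mul_eq_mul_div, div_lt_iff₀ (by positivity)]
    nlinarith [norm_nonneg (x - y)]
  exact hball hmem

/-- A proper affine subspace of ℝⁿ has empty interior. -/
lemma proper_affineSubspace_interior_empty {n : ℕ} (s : AffineSubspace ℝ (Euc n))
    (h : s ≠ ⊤) : interior (s : Set (Euc n)) = ∅ := by
  by_contra hne
  rw [← ne_eq, ← Set.nonempty_iff_ne_empty] at hne
  have h1 : affineSpan ℝ (interior (s : Set (Euc n))) = ⊤ :=
    isOpen_interior.affineSpan_eq_top hne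
  have h2 : affineSpan ℝ (interior (s : Set (Euc n))) ≤ s :=
    affineSpan_le.mpr interior_subset
  exact h (top_le_iff.mp (h1 ▸ h2))

/-- A finite union of closed sets with empty interior has empty interior. -/
lemma interior_sUnion_empty {α : Type*} [TopologicalSpace α] {T : Set (Set α)}
    (hT : T.Finite) :
    (∀ A ∈ T, IsClosed A ∧ interior A = ∅) → interior (⋃₀ T) = ∅ := by
  refine Set.Finite.induction_on
    (motive := fun T _ => (∀ A ∈ T, IsClosed A ∧ interior A = ∅) → interior (⋃₀ T) = ∅)
    T hT (by simp) ?_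
  intro A T' _ hT' ih h
  rw [sUnion_insert]
  have hAc := (h A (mem_insert _ _)).1
  have hAi := (h A (mem_insert _ _)).2
  have hU := ih (fun B hB => h B (mem_insert_of_mem _ hB))
  have h1 : interior (A ∪ ⋃₀ T') \ A ⊆ interior (⋃₀ T') := by
    apply interior_maximal
    · rintro z ⟨hz, hzA⟩
      rcases interior_subset hz with h' | h'
      · exact absurd h' hzA
      · exact h'
    · exact isOpen_interior.sdiff hAc
  rw [hU, subset_empty_iff, diff_eq_empty] at h1
  have h2 : interior (A ∪ ⋃₀ T') ⊆ interior A := interior_maximal h1 isOpen_interior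
  rw [hAi, subset_empty_iff] at h2
  exact h2

/-- in a polyhedral complex with full-dimensional convex support, every
inclusion-maximal face is full-dimensional. -/
theorem maximal_faces_full_dimensional {n : ℕ} (C : Set (Set (Euc n)))
    (hC : IsPolyhedralComplex C) (hconv : Convex ℝ (⋃₀ C))
    (hfull : polyDim (⋃₀ C) = (n : ℤ)) :
    ∀ F ∈ C, (∀ G ∈ C, F ⊆ G → F = G) → polyDim F = (n : ℤ) := by
  obtain ⟨hfin, -, hpoly, -, hinter⟩ := hC
  intro F hF hmax
  have hFpoly := hpoly F hF
  have hFne : F.Nonempty := hFpoly.1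
  have hFconv : Convex ℝ F := hFpoly.convex
  obtain ⟨x, hx⟩ := hFne.intrinsicInterior hFconv
  have hxF : x ∈ F := intrinsicInterior_subset hx
  -- Any member of C containing x contains all of F.
  have key : ∀ G ∈ C, x ∈ G → F ⊆ G := by
    intro G hG hxG
    have hfc : IsFace F (F ∩ G) := (hinter F hF G hG).1
    rcases hfc with h | h | ⟨f, c, _, hfle, hFG⟩
    · rw [← h]; exact inter_subset_right
    · exact absurd (h ▸ ⟨hxF, hxG⟩) (notMem_empty x)
    · have hxfc : f x = c := by
        have : x ∈ F ∩ {z | f z = c} := hFG ▸ ⟨hxF, hxG⟩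
        exact this.2
      have hsub : F ⊆ {z | f z = c} := by
        intro y hy
        obtain ⟨s, hs, hzF⟩ := relint_extend hx hy
        have hfz : f (x + s • (x - y)) ≤ c := hfle _ hzF
        have hfy : f y ≤ c := hfle y hy
        have : f x + s * (f x - f y) ≤ c := by
          simpa [map_add, map_smul, map_sub, smul_eq_mul] using hfz
        have : f y = c := by nlinarith [hxfc]
        exact this
      have : F ∩ G = F := by
        rw [hFG, inter_eq_self_of_subset_left hsub]
      rw [← this]; exact inter_subset_right
  -- The support has full-dimensional affine span.
  set S := ⋃₀ C with hS
  have hxS : x ∈ S := ⟨F, hF, hxF⟩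
  have hSne : S.Nonempty := ⟨x, hxS⟩
  have hvs : vectorSpan ℝ S = ⊤ := by
    have h1 : (Module.finrank ℝ (vectorSpan ℝ S) : ℤ) = (n : ℤ) := by
      rw [polyDim, if_neg hSne.ne_empty] at hfull
      exact hfull
    have h2 : Module.finrank ℝ (vectorSpan ℝ S) = n := by exact_mod_cast h1
    exact Submodule.eq_top_of_finrank_eq (by rw [h2, finrank_euclideanSpace_fin])
  have haff : affineSpan ℝ S = ⊤ := by
    have hne : ((affineSpan ℝ S : AffineSubspace ℝ (Euc n)) : Set (Euc n)).Nonempty :=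
      ⟨x, subset_affineSpan ℝ S hxS⟩
    exact (AffineSubspace.direction_eq_top_iff_of_nonempty hne).mp
      (by rw [direction_affineSpan]; exact hvs)
  obtain ⟨u, hu⟩ := (hconv.interior_nonempty_iff_affineSpan_eq_top).mpr haff
  -- A ball around x avoiding members of C that miss x.
  set K := ⋃₀ {G ∈ C | x ∉ G} with hK
  have hKclosed : IsClosed K := by
    rw [hK, sUnion_eq_biUnion]
    exact Set.Finite.isClosed_biUnion (hfin.subset (sep_subset _ _))
      (fun G hG => (hpoly G hG.1).isClosed)
  have hxK : x ∉ K := by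
    rintro ⟨G, ⟨-, hxG⟩, hxG'⟩
    exact hxG hxG'
  obtain ⟨ε, hε, hball⟩ := Metric.isOpen_iff.mp hKclosed.isOpen_compl x hxK
  -- An open nonempty subset of the support near x.
  set W := Metric.ball x ε ∩ interior S with hW
  have hWopen : IsOpen W := Metric.isOpen_ball.inter isOpen_interior
  have hWne : W.Nonempty := by
    set t : ℝ := min 1 (ε / (2 * (‖u - x‖ + 1))) with ht
    have htpos : 0 < t := lt_min one_pos (by positivity)
    have ht1 : t ≤ 1 := min_le_left _ _
    refine ⟨x + t • (u - x), ?_, ?_⟩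
    · rw [Metric.mem_ball]
      have : dist (x + t • (u - x)) x = t * ‖u - x‖ := by
        rw [dist_eq_norm]; simp [norm_smul, abs_of_pos htpos]
      rw [this]
      have h3 : t ≤ ε / (2 * (‖u - x‖ + 1)) := min_le_right _ _
      have h4 : t * ‖u - x‖ ≤ ε / (2 * (‖u - x‖ + 1)) * ‖u - x‖ :=
        mul_le_mul_of_nonneg_right h3 (norm_nonneg _)
      have h5 : ε / (2 * (‖u - x‖ + 1)) * ‖u - x‖ < ε := by
        rw [div_mul_eq_mul_div, div_lt_iff₀ (by positivity)]
        nlinarith [norm_nonneg (u - x)]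
      linarith
    · exact hconv.add_smul_sub_mem_interior hxS hu ⟨htpos, ht1⟩
  -- W is covered by the affine spans of the members of C containing x.
  have hWsub : W ⊆ ⋃₀ {A | ∃ G ∈ C, x ∈ G ∧ A = (affineSpan ℝ G : Set (Euc n))} := by
    intro v hv
    have hvS : v ∈ S := interior_subset hv.2
    obtain ⟨P, hP, hvP⟩ := hvS
    have hxP : x ∈ P := by
      by_contra hxP
      exact hball hv.1 ⟨P, ⟨hP, hxP⟩, hvP⟩
    exact ⟨(affineSpan ℝ P : Set (Euc n)), ⟨P, hP, hxP, rfl⟩,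
      subset_affineSpan ℝ P hvP⟩
  -- Hence some member of C containing x has full affine span.
  have hexists : ∃ G ∈ C, x ∈ G ∧ affineSpan ℝ G = ⊤ := by
    by_contra hcon
    push_neg at hcon
    have hempty : interior (⋃₀ {A | ∃ G ∈ C, x ∈ G ∧
        A = (affineSpan ℝ G : Set (Euc n))}) = ∅ := by
      apply interior_sUnion_empty
      · apply Set.Finite.ofFinset ((hfin.subset (sep_subset C (x ∈ ·))).toFinset.image
          (fun G => (affineSpan ℝ G : Set (Euc n))))
        intro A
        simp only [Finset.mem_image, Set.Finite.mem_toFinset, mem_sep_iff, mem_setOf_eq]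
        constructor
        · rintro ⟨G, ⟨hG, hxG⟩, rfl⟩; exact ⟨G, hG, hxG, rfl⟩
        · rintro ⟨G, hG, hxG, rfl⟩; exact ⟨G, ⟨hG, hxG⟩, rfl⟩
      · rintro A ⟨G, hG, hxG, rfl⟩
        exact ⟨(affineSpan ℝ G).closed_of_finiteDimensional,
          proper_affineSubspace_interior_empty _ (hcon G hG hxG)⟩
    obtain ⟨w, hw⟩ := hWne
    have : w ∈ interior (⋃₀ {A | ∃ G ∈ C, x ∈ G ∧
        A = (affineSpan ℝ G : Set (Euc n))}) :=
      interior_maximal hWsub hWopen hw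
    rw [hempty] at this
    exact this
  obtain ⟨G, hG, hxG, hGtop⟩ := hexists
  have hFG : F = G := hmax G hG (key G hG hxG)
  subst hFG
  rw [polyDim, if_neg hFne.ne_empty]
  have : vectorSpan ℝ F = ⊤ := by
    rw [← direction_affineSpan, hGtop, AffineSubspace.direction_top]
  rw [this]
  norm_cast
  rw [finrank_top, finrank_euclideanSpace_fin]
end

section
/- If a finite hyperplane arrangement 𝓐 is reduced-path connected, then 𝓐 is path convex: for every pair of regions Q, R, every path γ from Q to R, and every reduced path ρ from Q to R, γ can be transformed into ρ by a sequence of braid moves and nil moves. -/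
open Set
open scoped Classical

section AuxProof

variable {n : ℕ} {A : Finset ((Euc n →ₗ[ℝ] ℝ) × ℝ)}

lemma lin_continuous (f : Euc n →ₗ[ℝ] ℝ) : Continuous f :=
  f.continuous_of_finiteDimensional

lemma sign_const {s : Set (Euc n)} (hs : IsPreconnected s)
    (h : (Euc n →ₗ[ℝ] ℝ) × ℝ) (hne : ∀ y ∈ s, h.1 y ≠ h.2)
    {x y : Euc n} (hx : x ∈ s) (hy : y ∈ s) :
    (h.1 x < h.2 ↔ h.1 y < h.2) := by
  constructor
  · intro hlt
    by_contra hge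
    obtain ⟨z, hz, hz2⟩ := hs.intermediate_value₂ hx hy
      (lin_continuous h.1).continuousOn continuousOn_const hlt.le (not_lt.1 hge)
    exact hne z hz hz2
  · intro hlt
    by_contra hge
    obtain ⟨z, hz, hz2⟩ := hs.intermediate_value₂ hy hx
      (lin_continuous h.1).continuousOn continuousOn_const hlt.le (not_lt.1 hge)
    exact hne z hz hz2

lemma region_spec {P : Set (Euc n)} (hP : IsRegion A P) :
    ∃ x, x ∉ ArrUnion A ∧ x ∈ P ∧
      connectedComponentIn (ArrUnion A)ᶜ x ⊆ P ∧
      P = closure (connectedComponentIn (ArrUnion A)ᶜ x) := by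
  obtain ⟨x, hx, hPx⟩ := hP
  refine ⟨x, hx, ?_, ?_, hPx⟩
  · exact hPx ▸ subset_closure (mem_connectedComponentIn hx)
  · exact hPx ▸ subset_closure

lemma comp_ne {x : Euc n} (h : (Euc n →ₗ[ℝ] ℝ) × ℝ) (hh : h ∈ A) :
    ∀ y ∈ connectedComponentIn (ArrUnion A)ᶜ x, h.1 y ≠ h.2 := by
  intro y hy
  have : y ∈ (ArrUnion A)ᶜ := connectedComponentIn_subset _ _ hy
  intro he
  exact this (Set.mem_biUnion hh he)

lemma region_side {P : Set (Euc n)} (hP : IsRegion A P)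
    {h : (Euc n →ₗ[ℝ] ℝ) × ℝ} (hh : h ∈ A) :
    (∀ y ∈ P, h.1 y ≤ h.2) ∨ (∀ y ∈ P, h.2 ≤ h.1 y) := by
  obtain ⟨x, hx, hxP, hsub, hPx⟩ := region_spec hP
  have hxC : x ∈ connectedComponentIn (ArrUnion A)ᶜ x :=
    mem_connectedComponentIn hx
  have hpre : IsPreconnected (connectedComponentIn (ArrUnion A)ᶜ x) :=
    isPreconnected_connectedComponentIn
  have hxne : h.1 x ≠ h.2 := comp_ne h hh x hxC
  rcases hxne.lt_or_gt with hlt | hgt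
  · left
    rw [hPx]
    refine closure_minimal ?_ (isClosed_le (lin_continuous h.1) continuous_const)
    intro y hy
    exact ((sign_const hpre h (comp_ne h hh) hxC hy).1 hlt).le
  · right
    rw [hPx]
    refine closure_minimal ?_ (isClosed_le continuous_const (lin_continuous h.1))
    intro y hy
    by_contra hlt
    have := (sign_const hpre h (comp_ne h hh) hy hxC).1 (not_le.1 hlt)
    exact absurd hgt (not_lt.2 this.le)

lemma separates_iff {Q R : Set (Euc n)} (hQ : IsRegion A Q) (hR : IsRegion A R)
    {h : (Euc n →ₗ[ℝ] ℝ) × ℝ} (hh : h ∈ A)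
    {x y : Euc n} (hx : x ∈ Q) (hy : y ∈ R)
    (hx' : h.1 x ≠ h.2) (hy' : h.1 y ≠ h.2) :
    Separates h Q R ↔ ¬ (h.1 x < h.2 ↔ h.1 y < h.2) := by
  constructor
  · rintro ⟨u, hu, v, hv, H⟩ hiff
    rcases region_side hQ hh with sQ | sQ <;> rcases region_side hR hh with sR | sR
    · rcases H with ⟨h1, h2⟩ | ⟨h1, h2⟩
      · exact absurd (sR v hv) (not_le.2 h2)
      · exact absurd (sQ u hu) (not_le.2 h2)
    · have h1 : h.1 x < h.2 := (sQ x hx).lt_of_ne hx'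
      have h2 : h.2 < h.1 y := (sR y hy).lt_of_ne (Ne.symm hy')
      exact absurd (hiff.1 h1) (not_lt.2 h2.le)
    · have h1 : h.2 < h.1 x := (sQ x hx).lt_of_ne (Ne.symm hx')
      have h2 : h.1 y < h.2 := (sR y hy).lt_of_ne hy'
      exact absurd (hiff.2 h2) (not_lt.2 h1.le)
    · rcases H with ⟨h1, h2⟩ | ⟨h1, h2⟩
      · exact absurd (sQ u hu) (not_le.2 h1)
      · exact absurd (sR v hv) (not_le.2 h1)
  · intro hiff
    have : (h.1 x < h.2 ∧ h.2 < h.1 y) ∨ (h.1 y < h.2 ∧ h.2 < h.1 x) := by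
      rcases hx'.lt_or_gt with h1 | h1 <;> rcases hy'.lt_or_gt with h2 | h2
      · exact absurd (iff_of_true h1 h2) hiff
      · exact Or.inl ⟨h1, h2⟩
      · exact Or.inr ⟨h2, h1⟩
      · exact absurd (iff_of_false (not_lt.2 h1.le) (not_lt.2 h2.le)) hiff
    exact ⟨x, hx, y, hy, this⟩

def CellOf (A : Finset ((Euc n →ₗ[ℝ] ℝ) × ℝ)) (x : Euc n) : Set (Euc n) :=
  {y | ∀ h ∈ A, (h.1 x < h.2 → h.1 y < h.2) ∧ (h.2 < h.1 x → h.2 < h.1 y)}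

lemma cellOf_subset (hx : x ∉ ArrUnion A) : CellOf A x ⊆ (ArrUnion A)ᶜ := by
  intro y hy hyU
  obtain ⟨s, ⟨h, rfl⟩, hs⟩ := hyU
  simp only [Set.mem_iUnion] at hs
  obtain ⟨hh, hyh⟩ := hs
  have hxne : h.1 x ≠ h.2 := fun he => hx (Set.mem_biUnion hh he)
  rcases hxne.lt_or_gt with h1 | h1
  · exact absurd hyh (ne_of_lt ((hy h hh).1 h1))
  · exact absurd hyh (ne_of_gt ((hy h hh).2 h1))

lemma cellOf_convex (A : Finset ((Euc n →ₗ[ℝ] ℝ) × ℝ)) (x : Euc n) :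
    Convex ℝ (CellOf A x) := by
  intro y hy z hz a b ha hb hab
  intro h hh
  have hv : h.1 (a • y + b • z) = a * h.1 y + b * h.1 z := by
    simp [map_add, map_smul, smul_eq_mul]
  constructor
  · intro hlt
    have h1 := (hy h hh).1 hlt
    have h2 := (hz h hh).1 hlt
    rw [hv]
    rcases ha.eq_or_lt with rfl | ha'
    · simp only [zero_add] at hab; rw [hab]; simpa using h2
    · have e1 : a * h.1 y < a * h.2 := by nlinarith
      have e2 : b * h.1 z ≤ b * h.2 := mul_le_mul_of_nonneg_left h2.le hb
      have : a * h.2 + b * h.2 = h.2 := by rw [← add_mul, hab, one_mul]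
      linarith
  · intro hlt
    have h1 := (hy h hh).2 hlt
    have h2 := (hz h hh).2 hlt
    rw [hv]
    rcases ha.eq_or_lt with rfl | ha'
    · simp only [zero_add] at hab; rw [hab]; simpa using h2
    · have e1 : a * h.2 < a * h.1 y := by nlinarith
      have e2 : b * h.2 ≤ b * h.1 z := mul_le_mul_of_nonneg_left h2.le hb
      have : a * h.2 + b * h.2 = h.2 := by rw [← add_mul, hab, one_mul]
      linarith

lemma component_eq_cell {x : Euc n} (hx : x ∉ ArrUnion A) :
    connectedComponentIn (ArrUnion A)ᶜ x = CellOf A x := by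
  apply Subset.antisymm
  · intro y hy h hh
    have hxC : x ∈ connectedComponentIn (ArrUnion A)ᶜ x :=
      mem_connectedComponentIn hx
    have hpre : IsPreconnected (connectedComponentIn (ArrUnion A)ᶜ x) :=
      isPreconnected_connectedComponentIn
    have hiff := sign_const hpre h (comp_ne h hh) hxC hy
    have hyne := comp_ne h hh y hy
    have hxne := comp_ne h hh x hxC
    constructor
    · exact hiff.1
    · intro h1
      rcases hyne.lt_or_gt with h2 | h2
      · exact absurd (hiff.2 h2) (not_lt.2 h1.le)
      · exact h2
  · have hxcell : x ∈ CellOf A x := fun h hh => ⟨id, id⟩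
    exact (cellOf_convex A x).isPreconnected.subset_connectedComponentIn hxcell
      (cellOf_subset hx)

lemma region_eq_of_not_sep {Q R : Set (Euc n)} (hQ : IsRegion A Q) (hR : IsRegion A R)
    (hsep : ∀ h ∈ A, ¬ Separates h Q R) : Q = R := by
  obtain ⟨xQ, hxQ, hxQP, _, hQx⟩ := region_spec hQ
  obtain ⟨xR, hxR, hxRP, _, hRx⟩ := region_spec hR
  have hsame : ∀ h ∈ A, (h.1 xQ < h.2 ↔ h.1 xR < h.2) := by
    intro h hh
    have h1 : h.1 xQ ≠ h.2 := fun he => hxQ (Set.mem_biUnion hh he)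
    have h2 : h.1 xR ≠ h.2 := fun he => hxR (Set.mem_biUnion hh he)
    have := separates_iff hQ hR hh hxQP hxRP h1 h2
    exact not_not.1 (fun hc => hsep h hh (this.2 hc))
  have hcell : CellOf A xQ = CellOf A xR := by
    ext y
    constructor <;> intro hy h hh <;>
      obtain ⟨c1, c2⟩ := hy h hh
    · have h1 : h.1 xQ ≠ h.2 := fun he => hxQ (Set.mem_biUnion hh he)
      have h2 : h.1 xR ≠ h.2 := fun he => hxR (Set.mem_biUnion hh he)
      constructor
      · intro hlt; exact c1 ((hsame h hh).2 hlt)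
      · intro hlt
        refine c2 ?_
        rcases h1.lt_or_gt with h3 | h3
        · exact absurd ((hsame h hh).1 h3) (not_lt.2 hlt.le)
        · exact h3
    · have h1 : h.1 xQ ≠ h.2 := fun he => hxQ (Set.mem_biUnion hh he)
      have h2 : h.1 xR ≠ h.2 := fun he => hxR (Set.mem_biUnion hh he)
      constructor
      · intro hlt; exact c1 ((hsame h hh).1 hlt)
      · intro hlt
        refine c2 ?_
        rcases h2.lt_or_gt with h3 | h3
        · exact absurd ((hsame h hh).2 h3) (not_lt.2 hlt.le)
        · exact h3
  rw [hQx, hRx, component_eq_cell hxQ, component_eq_cell hxR, hcell]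

lemma exists_ne_zero {f : Euc n →ₗ[ℝ] ℝ} (hf : f ≠ 0) : ∃ u, f u ≠ 0 := by
  by_contra hc
  push_neg at hc
  exact hf (LinearMap.ext fun x => by simp [hc x])

lemma ker_proportional {f g : Euc n →ₗ[ℝ] ℝ} (hf : f ≠ 0)
    (hk : ∀ v, f v = 0 → g v = 0) : ∃ α : ℝ, g = α • f := by
  obtain ⟨u, hu⟩ := exists_ne_zero hf
  refine ⟨g u / f u, LinearMap.ext fun x => ?_⟩
  have h1 : f (x - (f x / f u) • u) = 0 := by
    simp [map_sub, map_smul, smul_eq_mul]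
    field_simp
    ring
  have h2 := hk _ h1
  simp [map_sub, map_smul, smul_eq_mul] at h2
  simp [LinearMap.smul_apply, smul_eq_mul]
  field_simp at h2 ⊢
  linarith [h2]

lemma hyp_point {f : Euc n →ₗ[ℝ] ℝ} (hf : f ≠ 0) (c : ℝ) : ∃ x, f x = c := by
  obtain ⟨u, hu⟩ := exists_ne_zero hf
  exact ⟨(c / f u) • u, by simp [map_smul, smul_eq_mul]; field_simp⟩

lemma hyp_eq_prop {h h' : (Euc n →ₗ[ℝ] ℝ) × ℝ} (hf : h.1 ≠ 0) (hf' : h'.1 ≠ 0)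
    (he : Hyp h = Hyp h') : ∃ α : ℝ, α ≠ 0 ∧ h'.1 = α • h.1 ∧ h'.2 = α * h.2 := by
  obtain ⟨x₀, hx₀⟩ := hyp_point hf h.2
  have hx₀' : h'.1 x₀ = h'.2 := by
    have : x₀ ∈ Hyp h := hx₀
    rw [he] at this; exact this
  have hker : ∀ v, h.1 v = 0 → h'.1 v = 0 := by
    intro v hv
    have : x₀ + v ∈ Hyp h := by simp [Hyp, map_add, hv, hx₀]
    rw [he] at this
    have h2 : h'.1 x₀ + h'.1 v = h'.2 := by simpa [Hyp, map_add] using this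
    linarith [hx₀']
  obtain ⟨α, hα⟩ := ker_proportional hf hker
  have hαne : α ≠ 0 := by
    rintro rfl
    simp at hα
    exact hf' hα
  refine ⟨α, hαne, hα, ?_⟩
  rw [← hx₀', hα]
  simp [LinearMap.smul_apply, smul_eq_mul, hx₀]

lemma separates_congr_aux {h h' : (Euc n →ₗ[ℝ] ℝ) × ℝ} {α : ℝ} (hα : α ≠ 0)
    (h1 : h'.1 = α • h.1) (h2 : h'.2 = α * h.2) {Q R : Set (Euc n)}
    (hs : Separates h Q R) : Separates h' Q R := by
  obtain ⟨x, hx, y, hy, H⟩ := hs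
  refine ⟨x, hx, y, hy, ?_⟩
  have e1 : h'.1 x = α * h.1 x := by rw [h1]; simp [smul_eq_mul]
  have e2 : h'.1 y = α * h.1 y := by rw [h1]; simp [smul_eq_mul]
  rcases hα.lt_or_gt with hneg | hpos
  · rcases H with ⟨a, b⟩ | ⟨a, b⟩
    · right; rw [e1, e2, h2]; constructor <;> nlinarith
    · left; rw [e1, e2, h2]; constructor <;> nlinarith
  · rcases H with ⟨a, b⟩ | ⟨a, b⟩
    · left; rw [e1, e2, h2]; constructor <;> nlinarith
    · right; rw [e1, e2, h2]; constructor <;> nlinarith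

lemma separates_congr (hA : IsArrangement A) {h h' : (Euc n →ₗ[ℝ] ℝ) × ℝ}
    (hh : h ∈ A) (hh' : h' ∈ A) (he : Hyp h = Hyp h') {Q R : Set (Euc n)} :
    Separates h Q R ↔ Separates h' Q R := by
  constructor
  · intro hs
    obtain ⟨α, hα, e1, e2⟩ := hyp_eq_prop (hA h hh) (hA h' hh') he
    exact separates_congr_aux hα e1 e2 hs
  · intro hs
    obtain ⟨α, hα, e1, e2⟩ := hyp_eq_prop (hA h' hh') (hA h hh) he.symm
    exact separates_congr_aux hα e1 e2 hs

lemma sep_inter_subset {Q R : Set (Euc n)} (hQ : IsRegion A Q) (hR : IsRegion A R)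
    {h : (Euc n →ₗ[ℝ] ℝ) × ℝ} (hh : h ∈ A) (hs : Separates h Q R) :
    Q ∩ R ⊆ Hyp h := by
  obtain ⟨u, hu, v, hv, H⟩ := hs
  rcases region_side hQ hh with sQ | sQ <;> rcases region_side hR hh with sR | sR
  · exfalso; rcases H with ⟨a, b⟩ | ⟨a, b⟩
    · exact absurd (sR v hv) (not_le.2 b)
    · exact absurd (sQ u hu) (not_le.2 b)
  · intro z hz
    exact le_antisymm (sQ z hz.1) (sR z hz.2)
  · intro z hz
    exact le_antisymm (sR z hz.2) (sQ z hz.1)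
  · exfalso; rcases H with ⟨a, b⟩ | ⟨a, b⟩
    · exact absurd (sQ u hu) (not_le.2 a)
    · exact absurd (sR v hv) (not_le.2 a)

lemma finrank_ker {f : Euc n →ₗ[ℝ] ℝ} (hf : f ≠ 0) :
    1 + Module.finrank ℝ (LinearMap.ker f) = n := by
  have hsurj : Function.Surjective f := by
    obtain ⟨u, hu⟩ := exists_ne_zero hf
    intro r
    exact ⟨(r / f u) • u, by simp [map_smul, smul_eq_mul]; field_simp⟩
  have := LinearMap.finrank_range_add_finrank_ker f
  rw [LinearMap.range_eq_top.2 hsurj] at this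
  simpa [finrank_euclideanSpace_fin] using this

lemma rank_contra {f g : Euc n →ₗ[ℝ] ℝ} (hf : f ≠ 0) (v : Euc n)
    (hv1 : f v = 0) (hv2 : g v ≠ 0)
    (W : Submodule ℝ (Euc n))
    (hW : W ≤ LinearMap.ker f ⊓ LinearMap.ker g)
    (hrk : (Module.finrank ℝ W : ℤ) = (n : ℤ) - 1) : False := by
  have hlt : LinearMap.ker f ⊓ LinearMap.ker g < LinearMap.ker f := by
    refine lt_of_le_of_ne inf_le_left (fun he => ?_)
    have : v ∈ LinearMap.ker f ⊓ LinearMap.ker g := by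
      rw [he]; exact LinearMap.mem_ker.2 hv1
    exact hv2 this.2
  have h1 : Module.finrank ℝ (LinearMap.ker f ⊓ LinearMap.ker g : Submodule ℝ (Euc n))
      < Module.finrank ℝ (LinearMap.ker f) := Submodule.finrank_lt_finrank_of_lt hlt
  have h2 : Module.finrank ℝ W ≤
      Module.finrank ℝ (LinearMap.ker f ⊓ LinearMap.ker g : Submodule ℝ (Euc n)) :=
    Submodule.finrank_mono hW
  have h3 := finrank_ker hf
  omega

lemma vectorSpan_le_ker {S : Set (Euc n)} {h : (Euc n →ₗ[ℝ] ℝ) × ℝ}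
    (hS : S ⊆ Hyp h) : vectorSpan ℝ S ≤ LinearMap.ker h.1 := by
  rw [vectorSpan_def]
  rw [Submodule.span_le]
  rintro v ⟨a, ha, b, hb, rfl⟩
  have ha' : h.1 a = h.2 := hS ha
  have hb' : h.1 b = h.2 := hS hb
  simp [LinearMap.mem_ker, vsub_eq_sub, map_sub, ha', hb']

lemma euc_zero_no_arr (hA : IsArrangement A) {h : (Euc n →ₗ[ℝ] ℝ) × ℝ}
    (hh : h ∈ A) (hn : (n : ℤ) - 1 = -1) : False := by
  have hn0 : n = 0 := by omega
  subst hn0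
  apply hA h hh
  apply LinearMap.ext
  intro x
  have : x = 0 := by
    apply PiLp.ext
    intro i
    exact i.elim0
  rw [this, map_zero]
  rfl

lemma adj_unique_wall (hA : IsArrangement A) {Q R : Set (Euc n)}
    (hadj : AdjacentReg A Q R) :
    ∃ h₀ ∈ A, Separates h₀ Q R ∧ ∀ h ∈ A, Separates h Q R → Hyp h = Hyp h₀ := by
  obtain ⟨hQ, hR, hne, hdim⟩ := hadj
  have hex : ∃ h₀ ∈ A, Separates h₀ Q R := by
    by_contra hc
    push_neg at hc
    exact hne (region_eq_of_not_sep hQ hR hc)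
  obtain ⟨h₀, hh₀, hs₀⟩ := hex
  refine ⟨h₀, hh₀, hs₀, fun h hh hs => ?_⟩
  by_contra hhyp
  -- Q ∩ R ⊆ both hyperplanes
  have hsub : Q ∩ R ⊆ Hyp h := sep_inter_subset hQ hR hh hs
  have hsub₀ : Q ∩ R ⊆ Hyp h₀ := sep_inter_subset hQ hR hh₀ hs₀
  have hQRne : (Q ∩ R) ≠ ∅ := by
    intro he
    rw [polyDim, if_pos he] at hdim
    exact euc_zero_no_arr hA hh hdim.symm
  have hrk : (Module.finrank ℝ (vectorSpan ℝ (Q ∩ R)) : ℤ) = (n : ℤ) - 1 := by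
    rw [polyDim, if_neg hQRne] at hdim
    exact hdim
  have hW : vectorSpan ℝ (Q ∩ R) ≤ LinearMap.ker h.1 ⊓ LinearMap.ker h₀.1 := by
    refine le_inf (vectorSpan_le_ker ?_) (vectorSpan_le_ker ?_)
    · exact hsub
    · exact hsub₀
  by_cases hk : ∀ v, h.1 v = 0 → h₀.1 v = 0
  · obtain ⟨α, hα⟩ := ker_proportional (hA h hh) hk
    have hαne : α ≠ 0 := fun h0 => by
      rw [h0, zero_smul] at hα; exact hA h₀ hh₀ hα
    obtain ⟨z, hz⟩ := Set.nonempty_iff_ne_empty.2 hQRne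
    have hz1 : h.1 z = h.2 := hsub hz
    have hz2 : h₀.1 z = h₀.2 := hsub₀ hz
    apply hhyp
    ext w
    simp only [Hyp, Set.mem_setOf_eq]
    have he2 : h₀.2 = α * h.2 := by
      rw [← hz2, hα, LinearMap.smul_apply, smul_eq_mul, hz1]
    rw [hα, he2, LinearMap.smul_apply, smul_eq_mul]
    exact ⟨fun hw => by rw [hw], fun hw => mul_left_cancel₀ hαne hw⟩
  · push_neg at hk
    obtain ⟨v, hv1, hv2⟩ := hk
    exact rank_contra (hA h hh) v hv1 hv2 _ hW hrk

noncomputable def sepWalls (A : Finset ((Euc n →ₗ[ℝ] ℝ) × ℝ)) (Q R : Set (Euc n)) :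
    Finset (Set (Euc n)) :=
  (A.filter (fun h => Separates h Q R)).image Hyp

lemma mem_sepWalls {Q R : Set (Euc n)} {H : Set (Euc n)} :
    H ∈ sepWalls A Q R ↔ ∃ h, h ∈ A ∧ Separates h Q R ∧ Hyp h = H := by
  simp only [sepWalls, Finset.mem_image, Finset.mem_filter]
  constructor
  · rintro ⟨h, ⟨h1, h2⟩, h3⟩; exact ⟨h, h1, h2, h3⟩
  · rintro ⟨h, h1, h2, h3⟩; exact ⟨h, ⟨h1, h2⟩, h3⟩

lemma region_base {P : Set (Euc n)} (hP : IsRegion A P) :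
    ∃ x ∈ P, ∀ h ∈ A, h.1 x ≠ h.2 := by
  obtain ⟨x, hx, hxP, _, _⟩ := region_spec hP
  exact ⟨x, hxP, fun h hh he => hx (Set.mem_biUnion hh he)⟩

lemma sepWalls_self {Q : Set (Euc n)} (hQ : IsRegion A Q) : sepWalls A Q Q = ∅ := by
  rw [Finset.eq_empty_iff_forall_notMem]
  intro H hH
  obtain ⟨h, hh, hs, _⟩ := mem_sepWalls.1 hH
  obtain ⟨u, hu, v, hv, H'⟩ := hs
  rcases region_side hQ hh with sQ | sQ
  · rcases H' with ⟨a, b⟩ | ⟨a, b⟩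
    · exact absurd (sQ v hv) (not_le.2 b)
    · exact absurd (sQ u hu) (not_le.2 b)
  · rcases H' with ⟨a, b⟩ | ⟨a, b⟩
    · exact absurd (sQ u hu) (not_le.2 a)
    · exact absurd (sQ v hv) (not_le.2 a)

lemma sepWalls_adj (hA : IsArrangement A) {P R₁ R₂ : Set (Euc n)}
    (hP : IsRegion A P) (hadj : AdjacentReg A R₁ R₂) :
    (sepWalls A P R₂).card % 2 = ((sepWalls A P R₁).card + 1) % 2 := by
  obtain ⟨h₀, hh₀, hs₀, huniq⟩ := adj_unique_wall hA hadj
  obtain ⟨hR₁, hR₂, _, _⟩ := hadj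
  obtain ⟨xP, hxP, hxP'⟩ := region_base hP
  obtain ⟨x1, hx1, hx1'⟩ := region_base hR₁
  obtain ⟨x2, hx2, hx2'⟩ := region_base hR₂
  -- per-hyperplane XOR
  have hxor : ∀ h ∈ A, (Separates h P R₂ ↔
      ¬ (Separates h P R₁ ↔ Separates h R₁ R₂)) := by
    intro h hh
    rw [separates_iff hP hR₂ hh hxP hx2 (hxP' h hh) (hx2' h hh),
        separates_iff hP hR₁ hh hxP hx1 (hxP' h hh) (hx1' h hh),
        separates_iff hR₁ hR₂ hh hx1 hx2 (hx1' h hh) (hx2' h hh)]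
    tauto
  have key : ∀ H, H ∈ sepWalls A P R₂ ↔
      ((H ∈ sepWalls A P R₁) ↔ ¬ H = Hyp h₀) := by
    intro H
    constructor
    · rintro hmem
      obtain ⟨h, hh, hs2, rfl⟩ := mem_sepWalls.1 hmem
      by_cases hs12 : Separates h R₁ R₂
      · have hHeq : Hyp h = Hyp h₀ := huniq h hh hs12
        have hnotin : Hyp h ∉ sepWalls A P R₁ := by
          intro hin
          obtain ⟨h', hh', hs1', hH'⟩ := mem_sepWalls.1 hin
          have : Separates h P R₁ :=
            (separates_congr hA hh' hh hH').1 hs1'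
          have := (hxor h hh).1 hs2
          tauto
        constructor
        · intro hin; exact absurd hin hnotin
        · intro hne; exact absurd hHeq (by tauto)
      · have hs1 : Separates h P R₁ := by
          have := (hxor h hh).1 hs2; tauto
        have hin : Hyp h ∈ sepWalls A P R₁ := mem_sepWalls.2 ⟨h, hh, hs1, rfl⟩
        have hne : ¬ Hyp h = Hyp h₀ := by
          intro he
          exact hs12 ((separates_congr hA hh₀ hh he.symm).1 hs₀)
        tauto
    · intro hiff
      by_cases hH : H = Hyp h₀
      · subst hH
        have hnotin : Hyp h₀ ∉ sepWalls A P R₁ := by tauto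
        have hs1 : ¬ Separates h₀ P R₁ := by
          intro hs1
          exact hnotin (mem_sepWalls.2 ⟨h₀, hh₀, hs1, rfl⟩)
        have hs2 : Separates h₀ P R₂ := by
          have := (hxor h₀ hh₀).2; tauto
        exact mem_sepWalls.2 ⟨h₀, hh₀, hs2, rfl⟩
      · have hin : H ∈ sepWalls A P R₁ := by tauto
        obtain ⟨h, hh, hs1, rfl⟩ := mem_sepWalls.1 hin
        have hs12 : ¬ Separates h R₁ R₂ := by
          intro hs12
          exact hH (huniq h hh hs12)
        have hs2 : Separates h P R₂ := by
          have := (hxor h hh).2; tauto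
        exact mem_sepWalls.2 ⟨h, hh, hs2, rfl⟩
  by_cases hin : Hyp h₀ ∈ sepWalls A P R₁
  · have heq : sepWalls A P R₂ = (sepWalls A P R₁).erase (Hyp h₀) := by
      ext H
      rw [Finset.mem_erase, key H]
      by_cases hH : H = Hyp h₀ <;> simp [hH, hin]
    have hpos : 0 < (sepWalls A P R₁).card := Finset.card_pos.2 ⟨_, hin⟩
    rw [heq, Finset.card_erase_of_mem hin]
    omega
  · have heq : sepWalls A P R₂ = insert (Hyp h₀) (sepWalls A P R₁) := by
      ext H
      rw [Finset.mem_insert, key H]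
      by_cases hH : H = Hyp h₀ <;> simp [hH, hin]
    rw [heq, Finset.card_insert_of_notMem hin]

lemma path_card_parity (hA : IsArrangement A) :
    ∀ (k : ℕ) (γ : ℕ → Set (Euc n)) (Q R : Set (Euc n)),
      IsPathA A γ k Q R → (sepWalls A Q R).card % 2 = k % 2 := by
  intro k
  induction k with
  | zero =>
    intro γ Q R hγ
    obtain ⟨h0, hk, hreg, _⟩ := hγ
    have : Q = R := by rw [← h0, hk]
    rw [this, sepWalls_self (hk ▸ hreg 0 le_rfl)]
    simp
  | succ k ih =>
    intro γ Q R hγ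
    obtain ⟨h0, hk, hreg, hadj⟩ := hγ
    have hpre : IsPathA A γ k Q (γ k) :=
      ⟨h0, rfl, fun i hi => hreg i (by omega), fun i hi => hadj i (by omega)⟩
    have h1 := ih γ Q (γ k) hpre
    have h2 := sepWalls_adj hA (h0 ▸ hreg 0 (by omega)) (hadj k (by omega))
    rw [hk] at h2
    omega

lemma paths_parity (hA : IsArrangement A) {γ ρ : ℕ → Set (Euc n)} {k l : ℕ}
    {Q R : Set (Euc n)} (hγ : IsPathA A γ k Q R) (hρ : IsPathA A ρ l Q R) :
    k % 2 = l % 2 := by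
  rw [← path_card_parity hA k γ Q R hγ, ← path_card_parity hA l ρ Q R hρ]

lemma adjacentReg_symm {Q R : Set (Euc n)} (h : AdjacentReg A Q R) :
    AdjacentReg A R Q :=
  ⟨h.2.1, h.1, h.2.2.1.symm, by rw [Set.inter_comm]; exact h.2.2.2⟩

/-! ### move manipulation -/

lemma bn_lift (t : ℕ) {p q : (ℕ → Set (Euc n)) × ℕ} (hpq : BNMove A p q) :
    BNMove A (p.1, p.2 + t) (q.1, q.2 + t) := by
  rcases hpq with hb | hn
  · left
    obtain ⟨hk, a, m, hm, ham, hlow, hhigh, F, hF, hpoly⟩ := hb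
    exact ⟨by simp [hk], a, m, hm, by omega, hlow, hhigh, F, hF, hpoly⟩
  · right
    obtain ⟨a, ha, heq, hk, hlow, hhigh⟩ := hn
    exact ⟨a, by omega, heq, by omega, hlow, hhigh⟩

lemma bn_lift_chain (t : ℕ) {p q : (ℕ → Set (Euc n)) × ℕ}
    (hpq : Relation.ReflTransGen (BNMove A) p q) :
    Relation.ReflTransGen (BNMove A) (p.1, p.2 + t) (q.1, q.2 + t) := by
  exact Relation.ReflTransGen.lift (fun r : (ℕ → Set (Euc n)) × ℕ => (r.1, r.2 + t)) (fun a b h => bn_lift t h) _ _ hpq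

lemma bn_endpoint {p q : (ℕ → Set (Euc n)) × ℕ} (hpq : BNMove A p q) :
    q.1 q.2 = p.1 p.2 := by
  rcases hpq with hb | hn
  · obtain ⟨hk, a, m, hm, ham, hlow, hhigh, F, hF, hpoly⟩ := hb
    rw [hk]
    exact hhigh p.2 (by omega)
  · obtain ⟨a, ha, heq, hk, hlow, hhigh⟩ := hn
    rcases Nat.lt_or_ge a q.2 with hlt | hge
    · rw [hhigh q.2 hlt, ← hk]
    · have haq : a = q.2 := by omega
      have h2 : a + 2 = p.2 := by omega
      rw [← haq, hlow a le_rfl, ← heq, h2]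

lemma bn_endpoint_chain {p q : (ℕ → Set (Euc n)) × ℕ}
    (hpq : Relation.ReflTransGen (BNMove A) p q) : q.1 q.2 = p.1 p.2 := by
  induction hpq with
  | refl => rfl
  | tail _ hstep ih => rw [bn_endpoint hstep, ih]

/-- The braid-move-only relation on pairs. -/
def BrRel (A : Finset ((Euc n →ₗ[ℝ] ℝ) × ℝ)) :
    ((ℕ → Set (Euc n)) × ℕ) → ((ℕ → Set (Euc n)) × ℕ) → Prop :=
  fun p q => BraidMove A p.1 p.2 q.1 q.2

lemma braid_snd_chain {p q : (ℕ → Set (Euc n)) × ℕ}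
    (hpq : Relation.ReflTransGen (BrRel A) p q) : p.2 = q.2 := by
  induction hpq with
  | refl => rfl
  | tail _ hstep ih => rw [ih, hstep.1]

lemma braid_step_transport {f g : ℕ → Set (Euc n)} {m : ℕ}
    (hb : BraidMove A f m g m) (f' : ℕ → Set (Euc n)) (K : ℕ)
    (hagree : ∀ i ≤ m, f' i = f i) (hK : m ≤ K) :
    ∃ g', BraidMove A f' K g' K ∧ (∀ i ≤ m, g' i = g i) ∧
      (∀ i, m < i → g' i = f' i) := by
  obtain ⟨-, a, mw, hmw, hamw, hlow, hhigh, F, hF, hpoly⟩ := hb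
  refine ⟨fun i => if a < i ∧ i < a + mw then g i else f' i, ⟨rfl, a, mw, hmw, by omega,
    ?_, ?_, F, hF, ?_⟩, ?_, ?_⟩
  · intro i hi
    simp only [if_neg (by omega : ¬ (a < i ∧ i < a + mw))]
  · intro i hi
    simp only [if_neg (by omega : ¬ (a < i ∧ i < a + mw))]
  · have heq : (fun i => if i % (2 * mw) ≤ mw then f' (a + i % (2 * mw))
        else (fun j => if a < j ∧ j < a + mw then g j else f' j) (a + 2 * mw - i % (2 * mw)))
        = (fun i => if i % (2 * mw) ≤ mw then f (a + i % (2 * mw))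
            else g (a + 2 * mw - i % (2 * mw))) := by
      funext i
      have hr : i % (2 * mw) < 2 * mw := Nat.mod_lt _ (by omega)
      by_cases hc : i % (2 * mw) ≤ mw
      · simp only [if_pos hc]
        exact hagree _ (by omega)
      · simp only [if_neg hc]
        rw [if_pos (by omega : a < a + 2 * mw - i % (2 * mw) ∧
            a + 2 * mw - i % (2 * mw) < a + mw)]
    rw [heq]
    exact hpoly
  · intro i hi
    by_cases hc : a < i ∧ i < a + mw
    · simp only [if_pos hc]
    · simp only [if_neg hc]
      rw [hagree i hi]
      rcases Nat.lt_or_ge a i with h1 | h1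
      · exact (hhigh i (by omega)).symm
      · exact (hlow i (by omega)).symm
  · intro i hi
    simp only [if_neg (by omega : ¬ (a < i ∧ i < a + mw))]

lemma braid_chain_transport {p q : (ℕ → Set (Euc n)) × ℕ}
    (hpq : Relation.ReflTransGen (BrRel A) p q) :
    ∀ (f' : ℕ → Set (Euc n)) (K : ℕ), (∀ i ≤ p.2, f' i = p.1 i) → p.2 ≤ K →
    ∃ g', Relation.ReflTransGen (BrRel A) (f', K) (g', K) ∧
      (∀ i ≤ q.2, g' i = q.1 i) ∧ (∀ i, q.2 < i → g' i = f' i) := by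
  induction hpq using Relation.ReflTransGen.head_induction_on with
  | refl =>
    intro f' K hagree hK
    exact ⟨f', Relation.ReflTransGen.refl, hagree, fun i hi => rfl⟩
  | head hstep hrest ih =>
    rename_i pa pc
    intro f' K hagree hK
    have hsnd : pa.2 = pc.2 := hstep.1.symm
    have hsnd2 : pc.2 = q.2 := braid_snd_chain hrest
    have hb : BraidMove A pa.1 pa.2 pc.1 pa.2 := by
      have : BraidMove A pa.1 pa.2 pc.1 pc.2 := hstep
      rwa [← hsnd] at this
    obtain ⟨g1, hg1b, hg1agree, hg1high⟩ :=
      braid_step_transport hb f' K hagree hK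
    obtain ⟨g', hchain, hagree', hhigh'⟩ := ih g1 K
      (fun i hi => by rw [hg1agree i (by omega)]) (by omega)
    refine ⟨g', Relation.ReflTransGen.head ?_ hchain, hagree', ?_⟩
    · exact hg1b
    · intro i hi
      rw [hhigh' i hi, hg1high i (by omega)]

theorem main_thm {n : ℕ}
    (A : Finset ((Euc n →ₗ[ℝ] ℝ) × ℝ)) (hA : IsArrangement A)
    (h : ReducedPathConnected A) : PathConvex A := by
  have key : ∀ (k : ℕ) (Q R : Set (Euc n)) (γ ρ : ℕ → Set (Euc n)) (l : ℕ),
      IsPathA A γ k Q R → IsReducedPathA A ρ l Q R →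
      ∃ σ : ℕ → Set (Euc n), Relation.ReflTransGen (BNMove A) (γ, k) (σ, l) ∧
        ∀ i, i ≤ l → σ i = ρ i := by
    intro k
    induction k using Nat.strong_induction_on with
    | _ k ih =>
    intro Q R γ ρ l hγ hρ
    have hlk : l ≤ k := hρ.2 γ k hγ
    rcases eq_or_lt_of_le hlk with heq | hlt
    · -- γ is itself reduced
      subst heq
      have hγred : IsReducedPathA A γ l Q R := ⟨hγ, hρ.2⟩
      obtain ⟨σ, hchain, hagree⟩ := h Q R γ l ρ l hγred hρ
      exact ⟨σ, Relation.ReflTransGen.mono (fun a b hb => Or.inl hb) _ _ hchain, hagree⟩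
    · have hk1 : 1 ≤ k := by omega
      have hk₁k : (k - 1) + 1 = k := by omega
      set k₁ := k - 1 with hk₁def
      have hpre : IsPathA A γ k₁ Q (γ k₁) :=
        ⟨hγ.1, rfl, fun i hi => hγ.2.2.1 i (by omega), fun i hi => hγ.2.2.2 i (by omega)⟩
      have hexist : ∃ m, ∃ f, IsPathA A f m Q (γ k₁) := ⟨k₁, γ, hpre⟩
      set l' := Nat.find hexist with hl'def
      obtain ⟨ρ', hρ'path⟩ := Nat.find_spec hexist
      rw [← hl'def] at hρ'path
      have hρ'red : IsReducedPathA A ρ' l' Q (γ k₁) :=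
        ⟨hρ'path, fun f'' k'' hp => Nat.find_min' hexist ⟨f'', hp⟩⟩
      obtain ⟨σ₁, hchain₁, hagree₁⟩ := ih k₁ (by omega) Q (γ k₁) γ ρ' l' hpre hρ'red
      have hchain₁' : Relation.ReflTransGen (BNMove A) (γ, k) (σ₁, l' + 1) := by
        have := bn_lift_chain (A := A) 1 hchain₁
        rwa [hk₁k] at this
      have hend : σ₁ (l' + 1) = γ k := bn_endpoint_chain hchain₁'
      have hRreg : IsRegion A R := by
        have := hγ.2.2.1 k le_rfl; rwa [hγ.2.1] at this
      have hadjR'R : AdjacentReg A (γ k₁) R := by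
        have := hγ.2.2.2 k₁ (by omega)
        rwa [hk₁k, hγ.2.1] at this
      have hπ : IsPathA A σ₁ (l' + 1) Q R := by
        refine ⟨?_, ?_, ?_, ?_⟩
        · rw [hagree₁ 0 (by omega), hρ'path.1]
        · rw [hend, hγ.2.1]
        · intro i hi
          rcases Nat.lt_or_ge i (l' + 1) with h1 | h1
          · rw [hagree₁ i (by omega)]; exact hρ'path.2.2.1 i (by omega)
          · have hieq : i = l' + 1 := by omega
            rw [hieq, hend, hγ.2.1]; exact hRreg
        · intro i hi
          rcases Nat.lt_or_ge i l' with h1 | h1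
          · rw [hagree₁ i (by omega), hagree₁ (i + 1) (by omega)]
            exact hρ'path.2.2.2 i h1
          · have hieq : i = l' := by omega
            rw [hieq, hagree₁ l' le_rfl, hend, hρ'path.2.1, hγ.2.1]
            exact hadjR'R
      have hllel : l ≤ l' + 1 := hρ.2 σ₁ (l' + 1) hπ
      have hpar : (l' + 1) % 2 = l % 2 := paths_parity hA hπ hρ.1
      rcases (by omega : l = l' + 1 ∨ l + 2 ≤ l' + 1) with heq | hle2
      · -- σ₁ is already reduced
        have hπred : IsReducedPathA A σ₁ (l' + 1) Q R :=
          ⟨hπ, fun f'' k'' hp => by have := hρ.2 f'' k'' hp; omega⟩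
        obtain ⟨σ, hchain₂, hagree₂⟩ := h Q R σ₁ (l' + 1) ρ l hπred hρ
        exact ⟨σ, hchain₁'.trans (Relation.ReflTransGen.mono (fun a b hb => Or.inl hb) _ _ hchain₂), hagree₂⟩
      · -- l' = l + 1 case
        set τ : ℕ → Set (Euc n) := fun i => if i ≤ l then ρ i else γ k₁ with hτdef
        have hτ1 : ∀ i, i ≤ l → τ i = ρ i := by
          intro i hi; simp only [hτdef, if_pos hi]
        have hτ2 : ∀ i, l < i → τ i = γ k₁ := by
          intro i hi; simp only [hτdef, if_neg (by omega : ¬ i ≤ l)]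
        have hτpath : IsPathA A τ (l + 1) Q (γ k₁) := by
          refine ⟨?_, ?_, ?_, ?_⟩
          · rw [hτ1 0 (by omega)]; exact hρ.1.1
          · rw [hτ2 (l + 1) (by omega)]
          · intro i hi
            by_cases h1 : i ≤ l
            · rw [hτ1 i h1]; exact hρ.1.2.2.1 i h1
            · rw [hτ2 i (by omega)]; exact hadjR'R.1
          · intro i hi
            by_cases h1 : i < l
            · rw [hτ1 i (by omega), hτ1 (i + 1) (by omega)]
              exact hρ.1.2.2.2 i h1
            · have hieq : i = l := by omega
              subst hieq
              rw [hτ1 i le_rfl, hτ2 (i + 1) (by omega), hρ.1.2.1]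
              exact adjacentReg_symm hadjR'R
        have hl'le : l' ≤ l + 1 := Nat.find_min' hexist ⟨τ, hτpath⟩
        have hl' : l' = l + 1 := by omega
        have hτred : IsReducedPathA A τ (l + 1) Q (γ k₁) :=
          ⟨hτpath, fun f'' k'' hp => by
            have := Nat.find_min' hexist ⟨f'', hp⟩; omega⟩
        obtain ⟨σ₀, hchain₀, hagree₀⟩ := h Q (γ k₁) ρ' l' τ (l + 1) hρ'red hτred
        have hchain₀' : Relation.ReflTransGen (BrRel A) (ρ', l') (σ₀, l + 1) := hchain₀
        obtain ⟨σ₂, hchain₂, hagree₂, hhigh₂⟩ :=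
          braid_chain_transport hchain₀' σ₁ (l' + 1) hagree₁ (by omega)
        have hagree₂' : ∀ i ≤ l + 1, σ₂ i = σ₀ i := hagree₂
        have hhigh₂' : ∀ i, l + 1 < i → σ₂ i = σ₁ i := hhigh₂
        have e1 : ∀ i, i ≤ l → σ₂ i = ρ i := by
          intro i hi
          rw [hagree₂' i (by omega), hagree₀ i (by omega), hτ1 i hi]
        have e2 : σ₂ (l + 2) = R := by
          rw [hhigh₂' (l + 2) (by omega)]
          have h3 : l + 2 = l' + 1 := by omega
          rw [h3, hend, hγ.2.1]
        set σ₃ : ℕ → Set (Euc n) := fun i => if i ≤ l then σ₂ i else σ₂ (i + 2)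
          with hσ₃def
        have hσ₃1 : ∀ i, i ≤ l → σ₃ i = σ₂ i := by
          intro i hi; simp only [hσ₃def, if_pos hi]
        have hσ₃2 : ∀ i, l < i → σ₃ i = σ₂ (i + 2) := by
          intro i hi; simp only [hσ₃def, if_neg (by omega : ¬ i ≤ l)]
        have hnil : NilMove σ₂ (l + 2) σ₃ l := by
          refine ⟨l, by omega, ?_, rfl, hσ₃1, hσ₃2⟩
          rw [e2, e1 l le_rfl]; exact hρ.1.2.1.symm
        have hstep₂ : Relation.ReflTransGen (BNMove A) (σ₁, l' + 1) (σ₂, l' + 1) :=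
          Relation.ReflTransGen.mono (fun a b hb => Or.inl hb) _ _ hchain₂
        have hstep₃ : Relation.ReflTransGen (BNMove A) (σ₂, l' + 1) (σ₃, l) := by
          refine Relation.ReflTransGen.single (Or.inr ?_)
          show NilMove σ₂ (l' + 1) σ₃ l
          rw [hl']
          exact hnil
        have hfinal : Relation.ReflTransGen (BNMove A) (γ, k) (σ₃, l) :=
          hchain₁'.trans (hstep₂.trans hstep₃)
        refine ⟨σ₃, hfinal, fun i hi => ?_⟩
        rw [hσ₃1 i hi]
        exact e1 i hi
  intro Q R γ k ρ l hγ hρ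
  exact key k Q R γ ρ l hγ hρ

end AuxProof

/-- a reduced-path connected hyperplane arrangement is path convex. -/
theorem path_convex_of_reduced_path_connected {n : ℕ}
    (A : Finset ((Euc n →ₗ[ℝ] ℝ) × ℝ)) (hA : IsArrangement A)
    (h : ReducedPathConnected A) : PathConvex A := by
  exact main_thm A hA h
end

section
/- Let 𝓛 be the set of covectors of a loop-free oriented matroid of rank n on a finite ground set, and let P be the order ideal in the big face lattice 𝓛 generated by a set of covectors of full rank n such that: whenever Y and Z are maximal covectors in P and X lies on a shortest path from Y to Z in the graph on covectors of rank n−1 or n (with edges given by comparability), then X ∈ P. Then the set P ∩ {X ∈ 𝓛 : rank(X) ∈ {n−1, n}} is connected. -/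
open Set

/-- The conformal (big face lattice) order on sign vectors: `X ≤ Y` when every nonzero
component of `X` agrees with `Y`. -/
def covLE {E : Type*} (X Y : E → SignType) : Prop := ∀ e, X e = 0 ∨ X e = Y e

/-- Strict conformal order. -/
def covLT {E : Type*} (X Y : E → SignType) : Prop := covLE X Y ∧ X ≠ Y

/-- Composition of sign vectors. -/
def covComp {E : Type*} (X Y : E → SignType) : E → SignType :=
  fun e => if X e = 0 then Y e else X e

/-- The separation set of two sign vectors. -/
def covSep {E : Type*} (X Y : E → SignType) : Set E :=
  {e | X e ≠ 0 ∧ X e = -Y e}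

/-- The covector axioms for an oriented matroid. -/
def IsCovectorSet {E : Type*} (L : Set (E → SignType)) : Prop :=
  (0 ∈ L) ∧ (∀ X ∈ L, -X ∈ L) ∧ (∀ X ∈ L, ∀ Y ∈ L, covComp X Y ∈ L) ∧
  ∀ X ∈ L, ∀ Y ∈ L, ∀ e ∈ covSep X Y, ∃ Z ∈ L, Z e = 0 ∧
    ∀ f, f ∉ covSep X Y → Z f = covComp X Y f

/-- The oriented matroid has no loops. -/
def LoopFree {E : Type*} (L : Set (E → SignType)) : Prop :=
  ∀ e, ∃ X ∈ L, X e ≠ 0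

/-- The rank of a covector `X` in the big face lattice: the greatest length of a strictly
increasing chain of covectors from the zero covector to `X`. -/
noncomputable def covRank {E : Type*} (L : Set (E → SignType)) (X : E → SignType) : ℕ :=
  sSup {k | ∃ c : ℕ → (E → SignType), c 0 = 0 ∧ c k = X ∧ (∀ i, i ≤ k → c i ∈ L) ∧
    ∀ i, i < k → covLT (c i) (c (i + 1))}

/-- Membership in the graph on covectors of rank `n - 1` or `n`. -/
def InGr {E : Type*} (L : Set (E → SignType)) (n : ℕ) (X : E → SignType) : Prop :=
  X ∈ L ∧ (covRank L X = n - 1 ∨ covRank L X = n)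

/-- A path in the graph on covectors of rank `n - 1` or `n`, whose edges join
comparable covectors. -/
def GrPath {E : Type*} (L : Set (E → SignType)) (n : ℕ)
    (γ : ℕ → (E → SignType)) (k : ℕ) (Y Z : E → SignType) : Prop :=
  γ 0 = Y ∧ γ k = Z ∧ (∀ i, i ≤ k → InGr L n (γ i)) ∧
  ∀ i, i < k → (covLT (γ i) (γ (i + 1)) ∨ covLT (γ (i + 1)) (γ i))

namespace OMAux

attribute [local instance] Classical.propDecidable

variable {E : Type*}

lemma sign_opp {a b : SignType} (ha : a ≠ 0) (hb : b ≠ 0) (hab : a ≠ b) : a = -b := by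
  cases a <;> cases b <;> simp_all <;> rfl

lemma sign_opp' {a : SignType} (ha : a ≠ 0) : a ≠ -a := by
  cases a <;> simp_all

lemma covLE_refl (X : E → SignType) : covLE X X := fun e => Or.inr rfl

lemma covLE_zero (X : E → SignType) : covLE 0 X := fun e => Or.inl rfl

lemma covLE_trans {X Y Z : E → SignType} (h1 : covLE X Y) (h2 : covLE Y Z) : covLE X Z := by
  intro e
  rcases h1 e with h | h
  · exact Or.inl h
  · rcases h2 e with h' | h'
    · exact Or.inl (h.trans h')
    · exact Or.inr (h.trans h')

lemma covLE_antisymm {X Y : E → SignType} (h1 : covLE X Y) (h2 : covLE Y X) : X = Y := by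
  funext e
  rcases h1 e with h | h
  · rcases h2 e with h' | h'
    · rw [h, h']
    · rw [h, h', h]
  · exact h

lemma covLT_trans {X Y Z : E → SignType} (h1 : covLT X Y) (h2 : covLT Y Z) : covLT X Z := by
  refine ⟨covLE_trans h1.1 h2.1, fun h => ?_⟩
  subst h
  exact h2.2 (covLE_antisymm h2.1 h1.1)

/-- support -/
def gsupp (X : E → SignType) : Set E := {e | X e ≠ 0}

lemma gsupp_subset_of_le {X Y : E → SignType} (h : covLE X Y) : gsupp X ⊆ gsupp Y := by
  intro e he
  rcases h e with h' | h'
  · exact absurd h' he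
  · simpa [gsupp, ← h'] using he

lemma eq_of_le_of_supp_le {X Y : E → SignType} (h : covLE X Y) (hs : gsupp Y ⊆ gsupp X) :
    X = Y := by
  funext e
  rcases h e with h' | h'
  · by_cases hy : Y e = 0
    · rw [h', hy]
    · exact absurd h' (hs hy)
  · exact h'

lemma gsupp_ssubset_of_lt {X Y : E → SignType} (h : covLT X Y) : gsupp X ⊂ gsupp Y := by
  refine ⟨gsupp_subset_of_le h.1, fun hs => h.2 (eq_of_le_of_supp_le h.1 hs)⟩

lemma covLE_covComp_left (X Y : E → SignType) : covLE X (covComp X Y) := by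
  intro e
  by_cases h : X e = 0
  · exact Or.inl h
  · exact Or.inr (by simp [covComp, h])

lemma covComp_apply_of_ne {X Y : E → SignType} {e : E} (h : X e ≠ 0) : covComp X Y e = X e := by
  simp [covComp, h]

lemma covComp_apply_of_eq {X Y : E → SignType} {e : E} (h : X e = 0) : covComp X Y e = Y e := by
  simp [covComp, h]

lemma covComp_eq_self_of_le {X Y : E → SignType} (h : covLE Y X) : covComp X Y = X := by
  funext e
  by_cases hx : X e = 0
  · rcases h e with h' | h' <;> simp [covComp, hx, h']
  · simp [covComp, hx]

lemma covSep_symm {X Y : E → SignType} {e : E} (h : e ∈ covSep X Y) : e ∈ covSep Y X := by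
  obtain ⟨h1, h2⟩ := h
  have hy : Y e ≠ 0 := by
    intro h0; rw [h0] at h2; simp at h2; exact h1 h2
  exact ⟨hy, by rw [h2]; simp⟩

lemma not_mem_covSep_of_zero {X Y : E → SignType} {e : E} (h : X e = 0) : e ∉ covSep X Y := by
  intro ⟨h1, _⟩; exact h1 h

/-- effective ground set -/
def gr (M : Set (E → SignType)) : Set E := {e | ∃ X ∈ M, X e ≠ 0}

lemma gsupp_subset_gr {M : Set (E → SignType)} {X : E → SignType} (hX : X ∈ M) :
    gsupp X ⊆ gr M := fun e he => ⟨X, hX, he⟩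

/-- tope = maximal covector -/
def IsTope (M : Set (E → SignType)) (T : E → SignType) : Prop :=
  T ∈ M ∧ ∀ Y ∈ M, covLE T Y → Y = T

lemma tope_full {M : Set (E → SignType)} (hM : IsCovectorSet M) {T : E → SignType}
    (hT : IsTope M T) : ∀ e ∈ gr M, T e ≠ 0 := by
  intro e ⟨X, hX, hXe⟩
  intro hTe
  have hc : covComp T X ∈ M := hM.2.2.1 T hT.1 X hX
  have := hT.2 _ hc (covLE_covComp_left T X)
  have : covComp T X e = T e := by rw [this]
  rw [covComp_apply_of_eq hTe, hTe] at this
  exact hXe this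

lemma tope_of_full {M : Set (E → SignType)} {T : E → SignType} (hT : T ∈ M)
    (hfull : ∀ e ∈ gr M, T e ≠ 0) : IsTope M T := by
  refine ⟨hT, fun Y hY hle => ?_⟩
  refine (eq_of_le_of_supp_le hle fun e he => hfull e (gsupp_subset_gr hY he)).symm

section Chains
variable [Fintype E]

/-- strictly increasing chain from 0 to X, matching covRank's definition -/
def StrChain (M : Set (E → SignType)) (c : ℕ → E → SignType) (k : ℕ) (X : E → SignType) : Prop :=
  c 0 = 0 ∧ c k = X ∧ (∀ i, i ≤ k → c i ∈ M) ∧ ∀ i, i < k → covLT (c i) (c (i + 1))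

lemma covRank_eq_sSup (M : Set (E → SignType)) (X : E → SignType) :
    covRank M X = sSup {k | ∃ c, StrChain M c k X} := rfl

/-- cover relation -/
def CovRel (M : Set (E → SignType)) (u v : E → SignType) : Prop :=
  u ∈ M ∧ v ∈ M ∧ covLT u v ∧ ∀ w ∈ M, covLT u w → covLT w v → False

/-- saturated chain from u to v -/
def SatFrom (M : Set (E → SignType)) (c : ℕ → E → SignType) (k : ℕ)
    (u v : E → SignType) : Prop :=
  c 0 = u ∧ c k = v ∧ (∀ i, i ≤ k → c i ∈ M) ∧ ∀ i, i < k → CovRel M (c i) (c (i + 1))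

def SatChain (M : Set (E → SignType)) (c : ℕ → E → SignType) (k : ℕ) (X : E → SignType) :
    Prop := SatFrom M c k 0 X

lemma strchain_le {M : Set (E → SignType)} {c k X} (h : StrChain M c k X) :
    ∀ i j, i ≤ j → j ≤ k → covLE (c i) (c j) := by
  intro i j hij hjk
  induction j with
  | zero => simp_all [Nat.le_zero.mp hij, covLE_refl]
  | succ m ih =>
    rcases Nat.lt_or_ge i (m+1) with hlt | hge
    · have h1 : covLE (c i) (c m) := ih (by omega) (by omega)
      exact covLE_trans h1 (h.2.2.2 m (by omega)).1
    · have : i = m + 1 := by omega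
      subst this; exact covLE_refl _

lemma satfrom_str {M : Set (E → SignType)} {c k u v} (h : SatFrom M c k u v) :
    c 0 = u ∧ c k = v ∧ (∀ i, i ≤ k → c i ∈ M) ∧ ∀ i, i < k → covLT (c i) (c (i + 1)) :=
  ⟨h.1, h.2.1, h.2.2.1, fun i hi => (h.2.2.2 i hi).2.2.1⟩

lemma satchain_strchain {M : Set (E → SignType)} {c k X} (h : SatChain M c k X) :
    StrChain M c k X := satfrom_str h

/-- chain length bound -/
lemma strchain_bound {M : Set (E → SignType)} {c k X} (h : StrChain M c k X) :
    k ≤ Fintype.card E := by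
  have key : ∀ i, i ≤ k → i ≤ (gsupp (c i)).ncard := by
    intro i hi
    induction i with
    | zero => omega
    | succ m ih =>
      have h1 : m ≤ (gsupp (c m)).ncard := ih (by omega)
      have h2 : gsupp (c m) ⊂ gsupp (c (m+1)) := gsupp_ssubset_of_lt (h.2.2.2 m (by omega))
      have h3 : (gsupp (c m)).ncard < (gsupp (c (m+1))).ncard :=
        Set.ncard_lt_ncard h2 (Set.toFinite _)
      omega
  have h4 := key k le_rfl
  have h5 : (gsupp (c k)).ncard ≤ Fintype.card E := by
    have := Set.ncard_le_ncard (Set.subset_univ (gsupp (c k))) (Set.toFinite _)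
    simpa [Set.ncard_univ] using this
  omega

lemma strchain_sets_nonempty {M : Set (E → SignType)} (h0 : (0:E → SignType) ∈ M) {X}
    (hX : X ∈ M) : {k | ∃ c, StrChain M c k X}.Nonempty := by
  by_cases hX0 : X = 0
  · exact ⟨0, fun _ => X, by simp [StrChain, hX0]; simpa [hX0] using hX⟩
  · refine ⟨1, fun i => if i = 0 then 0 else X, ?_⟩
    refine ⟨by simp, by simp, ?_, ?_⟩
    · intro i hi
      by_cases h : i = 0 <;> simp [h, h0, hX]
    · intro i hi
      have : i = 0 := by omega
      subst this
      simp only [if_pos rfl, if_neg one_ne_zero]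
      exact ⟨covLE_zero X, fun h => hX0 h.symm⟩

lemma strchain_bdd (M : Set (E → SignType)) (X : E → SignType) :
    BddAbove {k | ∃ c, StrChain M c k X} := by
  refine ⟨Fintype.card E, fun k ⟨c, hc⟩ => strchain_bound hc⟩

lemma le_covRank {M : Set (E → SignType)} {c k X} (h : StrChain M c k X) :
    k ≤ covRank M X := le_csSup (strchain_bdd M X) ⟨c, h⟩

lemma covRank_le {M : Set (E → SignType)} (h0 : (0:E→SignType) ∈ M) {X} (hX : X ∈ M) {m : ℕ}
    (h : ∀ c k, StrChain M c k X → k ≤ m) : covRank M X ≤ m :=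
  csSup_le (strchain_sets_nonempty h0 hX) (fun k ⟨c, hc⟩ => h c k hc)

lemma exists_strchain_rank {M : Set (E → SignType)} (h0 : (0:E→SignType) ∈ M) {X}
    (hX : X ∈ M) : ∃ c, StrChain M c (covRank M X) X :=
  Nat.sSup_mem (strchain_sets_nonempty h0 hX) (strchain_bdd M X)

lemma covRank_zero {M : Set (E → SignType)} (h0 : (0:E→SignType) ∈ M) :
    covRank M (0 : E → SignType) = 0 := by
  refine le_antisymm (covRank_le h0 h0 ?_) (Nat.zero_le _)
  intro c k hc
  by_contra h
  push_neg at h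
  have h1 := hc.2.2.2 0 (by omega)
  have := strchain_le hc 1 k (by omega) (by omega)
  rw [hc.2.1] at this
  have h2 : c 1 = 0 := covLE_antisymm this (by rw [← hc.1]; exact (strchain_le hc 0 1 (by omega) (by omega)))
  rw [hc.1, h2] at h1
  exact h1.2 rfl

/-- appending one element to a strict chain -/
lemma strchain_snoc {M : Set (E → SignType)} {c k X Y} (h : StrChain M c k X)
    (hY : Y ∈ M) (hXY : covLT X Y) :
    StrChain M (fun i => if i ≤ k then c i else Y) (k+1) Y := by
  refine ⟨by simp [h.1], by simp, ?_, ?_⟩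
  · intro i hi
    by_cases hik : i ≤ k
    · simpa [hik] using h.2.2.1 i hik
    · simpa [hik] using hY
  · intro i hi
    by_cases hik : i < k
    · simpa [Nat.le_of_lt hik, Nat.succ_le_of_lt hik] using h.2.2.2 i hik
    · have : i = k := by omega
      subst this
      simpa [Nat.not_succ_le_self, h.2.1] using hXY

lemma covRank_lt_of_covLT {M : Set (E → SignType)} (h0 : (0:E→SignType) ∈ M) {X Y}
    (hX : X ∈ M) (hY : Y ∈ M) (h : covLT X Y) : covRank M X < covRank M Y := by
  obtain ⟨c, hc⟩ := exists_strchain_rank h0 hX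
  have := le_covRank (strchain_snoc hc hY h)
  omega

/-- existence of maximal elements of finite sets wrt covLT -/
lemma exists_cov_maximal {S : Set (E → SignType)} (hS : S.Nonempty) :
    ∃ w ∈ S, ∀ w' ∈ S, ¬ covLT w w' := by
  obtain ⟨w, hw, hmax⟩ := Set.Finite.exists_maximalFor (fun w => (gsupp w).ncard) S
    (Set.toFinite S) hS
  refine ⟨w, hw, fun w' hw' hlt => ?_⟩
  have h1 : gsupp w ⊂ gsupp w' := gsupp_ssubset_of_lt hlt
  have h2 : (gsupp w).ncard < (gsupp w').ncard := Set.ncard_lt_ncard h1 (Set.toFinite _)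
  have : (gsupp w').ncard ≤ (gsupp w).ncard := hmax (j := w') hw' (le_of_lt h2)
  omega

/-- topes exist above everything -/
lemma exists_tope_above {M : Set (E → SignType)} {X} (hX : X ∈ M) :
    ∃ T, IsTope M T ∧ covLE X T := by
  obtain ⟨w, hw, hmax⟩ := exists_cov_maximal (⟨X, hX, covLE_refl X⟩ :
    {Y ∈ M | covLE X Y}.Nonempty)
  refine ⟨w, ⟨hw.1, fun Y hY hle => ?_⟩, hw.2⟩
  by_contra hne
  exact hmax Y ⟨hY, covLE_trans hw.2 hle⟩ ⟨hle, fun h => hne h.symm⟩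

/-- existence of saturated chains between comparable elements -/
lemma exists_satfrom {M : Set (E → SignType)} :
    ∀ m : ℕ, ∀ v ∈ M, (gsupp v).ncard = m → ∀ u ∈ M, covLE u v →
    ∃ c k, SatFrom M c k u v := by
  intro m
  induction m using Nat.strong_induction_on with
  | _ m ih =>
    intro v hv hm u hu huv
    by_cases huv' : u = v
    · exact ⟨fun _ => v, 0, by simp [SatFrom, huv', hv]⟩
    · -- find coatom w in [u, v)
      obtain ⟨w, hw, hmax⟩ := exists_cov_maximal
        (⟨u, ⟨hu, covLE_refl u⟩, huv, huv'⟩ : {w ∈ {w ∈ M | covLE u w} | covLT w v}.Nonempty)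
      obtain ⟨⟨hwM, huw⟩, hwv⟩ := hw
      have hcov : CovRel M w v := by
        refine ⟨hwM, hv, hwv, fun z hz h1 h2 => ?_⟩
        exact hmax z ⟨⟨hz, covLE_trans huw h1.1⟩, h2⟩ h1
      have hsupp : (gsupp w).ncard < m := by
        rw [← hm]
        exact Set.ncard_lt_ncard (gsupp_ssubset_of_lt hwv) (Set.toFinite _)
      obtain ⟨c, k, hc⟩ := ih _ hsupp w hwM rfl u hu huw
      refine ⟨fun i => if i ≤ k then c i else v, k + 1, ?_, ?_, ?_, ?_⟩
      · simp [hc.1]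
      · simp
      · intro i hi
        by_cases hik : i ≤ k
        · simpa [hik] using hc.2.2.1 i hik
        · simpa [hik] using hv
      · intro i hi
        by_cases hik : i < k
        · simpa [Nat.le_of_lt hik, Nat.succ_le_of_lt hik] using hc.2.2.2 i hik
        · have : i = k := by omega
          subst this
          simpa [Nat.not_succ_le_self, hc.2.1] using hcov

lemma exists_satchain {M : Set (E → SignType)} (h0 : (0:E→SignType) ∈ M) {X} (hX : X ∈ M) :
    ∃ c k, SatChain M c k X :=
  exists_satfrom _ X hX rfl 0 h0 (covLE_zero X)

lemma satfrom_pos {M : Set (E → SignType)} {c k u v} (h : SatFrom M c k u v) (hne : u ≠ v) :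
    1 ≤ k := by
  rcases Nat.eq_zero_or_pos k with h0 | h1
  · subst h0; exact absurd (h.1.symm.trans h.2.1) hne
  · exact h1

/-- concatenation of saturated chains -/
def chcat (c : ℕ → E → SignType) (k : ℕ) (d : ℕ → E → SignType) : ℕ → E → SignType :=
  fun i => if i < k then c i else d (i - k)

lemma satfrom_cat {M : Set (E → SignType)} {c k u v} {d l w} (h1 : SatFrom M c k u v)
    (h2 : SatFrom M d l v w) : SatFrom M (chcat c k d) (k + l) u w := by
  have heq : ∀ i, i ≤ k → chcat c k d i = c i := by
    intro i hi
    by_cases h : i < k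
    · simp [chcat, h]
    · have : i = k := by omega
      subst this
      simp [chcat, h2.1, h1.2.1]
  have heq2 : ∀ i, k ≤ i → chcat c k d i = d (i - k) := by
    intro i hi
    by_cases h : i < k
    · omega
    · simp [chcat, h]
  refine ⟨by rw [heq 0 (by omega), h1.1], by rw [heq2 _ (by omega)]; simpa using h2.2.1, ?_, ?_⟩
  · intro i hi
    rcases le_or_gt i k with h | h
    · rw [heq i h]; exact h1.2.2.1 i h
    · rw [heq2 i (by omega)]; exact h2.2.2.1 _ (by omega)
  · intro i hi
    rcases Nat.lt_or_ge i k with h | h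
    · rw [heq i (by omega), heq (i+1) (by omega)]
      exact h1.2.2.2 i h
    · rw [heq2 i h, heq2 (i+1) (by omega)]
      have : i + 1 - k = (i - k) + 1 := by omega
      rw [this]
      exact h2.2.2.2 _ (by omega)

/-- refinement: every strict chain is dominated by a saturated chain -/
lemma strchain_to_satchain {M : Set (E → SignType)} :
    ∀ k : ℕ, ∀ c X, StrChain M c k X → ∃ c' k', k ≤ k' ∧ SatChain M c' k' X := by
  intro k
  induction k with
  | zero =>
    intro c X hc
    exact ⟨c, 0, le_rfl, ⟨hc.1, hc.2.1, hc.2.2.1, fun i hi => absurd hi (by omega)⟩⟩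
  | succ k ih =>
    intro c X hc
    have hpre : StrChain M c k (c k) := ⟨hc.1, rfl, fun i hi => hc.2.2.1 i (by omega),
      fun i hi => hc.2.2.2 i (by omega)⟩
    obtain ⟨c', k', hk', hc'⟩ := ih c (c k) hpre
    have hstep : covLT (c k) X := by
      have := hc.2.2.2 k (by omega)
      rwa [hc.2.1] at this
    have hXM : X ∈ M := by rw [← hc.2.1]; exact hc.2.2.1 (k+1) le_rfl
    obtain ⟨d, l, hd⟩ := exists_satfrom _ X hXM rfl (c k)
      (hc.2.2.1 k (by omega)) hstep.1
    have hl : 1 ≤ l := satfrom_pos hd hstep.2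
    exact ⟨chcat c' k' d, k' + l, by omega, satfrom_cat hc' hd⟩

end Chains

section Constructions

/-- the covectors supported inside S -/
def Msub (S : Set E) (M : Set (E → SignType)) : Set (E → SignType) :=
  {X ∈ M | gsupp X ⊆ S}

lemma gsupp_zero : gsupp (0 : E → SignType) = ∅ := by
  ext e; simp [gsupp]

lemma sign_neg_zero (a : SignType) : -a = 0 ↔ a = 0 := by
  cases a <;> decide

lemma gsupp_neg (X : E → SignType) : gsupp (-X) = gsupp X := by
  ext e
  simp only [gsupp, mem_setOf_eq, ne_eq, Pi.neg_apply, sign_neg_zero]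

lemma gsupp_covComp (X Y : E → SignType) : gsupp (covComp X Y) ⊆ gsupp X ∪ gsupp Y := by
  intro e he
  by_cases h : X e = 0
  · right; rw [gsupp, mem_setOf_eq, covComp_apply_of_eq h] at he; exact he
  · left; exact h

lemma isCov_Msub {M : Set (E → SignType)} (hM : IsCovectorSet M) (S : Set E) :
    IsCovectorSet (Msub S M) := by
  obtain ⟨h0, hneg, hcomp, helim⟩ := hM
  refine ⟨⟨h0, by simp [gsupp_zero]⟩, ?_, ?_, ?_⟩
  · rintro X ⟨hX, hs⟩
    exact ⟨hneg X hX, by rwa [gsupp_neg]⟩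
  · rintro X ⟨hX, hsX⟩ Y ⟨hY, hsY⟩
    exact ⟨hcomp X hX Y hY, (gsupp_covComp X Y).trans (union_subset hsX hsY)⟩
  · rintro X ⟨hX, hsX⟩ Y ⟨hY, hsY⟩ e he
    obtain ⟨Z, hZ, hZe, hZf⟩ := helim X hX Y hY e he
    refine ⟨Z, ⟨hZ, ?_⟩, hZe, hZf⟩
    intro f hf
    by_cases hsep : f ∈ covSep X Y
    · exact hsX hsep.1
    · rw [gsupp, mem_setOf_eq, hZf f hsep] at hf
      exact ((gsupp_covComp X Y).trans (union_subset hsX hsY)) hf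

lemma mem_Msub {S : Set E} {M : Set (E → SignType)} {X : E → SignType} :
    X ∈ Msub S M ↔ X ∈ M ∧ gsupp X ⊆ S := Iff.rfl

lemma gr_Msub_subset (S : Set E) (M : Set (E → SignType)) : gr (Msub S M) ⊆ S ∩ gr M := by
  rintro e ⟨X, ⟨hX, hs⟩, he⟩
  exact ⟨hs he, X, hX, he⟩

lemma Msub_Msub (S S' : Set E) (M : Set (E → SignType)) :
    Msub S (Msub S' M) = Msub (S ∩ S') M := by
  ext X
  simp only [mem_Msub, subset_inter_iff]
  tauto

/-- section at a coordinate: covectors vanishing at e -/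
def Msec (e : E) (M : Set (E → SignType)) : Set (E → SignType) := Msub {e}ᶜ M

lemma mem_Msec {e : E} {M : Set (E → SignType)} {X : E → SignType} :
    X ∈ Msec e M ↔ X ∈ M ∧ X e = 0 := by
  simp only [Msec, mem_Msub]
  constructor
  · rintro ⟨hX, hs⟩
    refine ⟨hX, ?_⟩
    by_contra h
    exact (hs h) rfl
  · rintro ⟨hX, he⟩
    refine ⟨hX, fun f hf => ?_⟩
    simp only [mem_compl_iff, mem_singleton_iff]
    rintro rfl
    exact hf he

lemma isCov_Msec {M : Set (E → SignType)} (hM : IsCovectorSet M) (e : E) :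
    IsCovectorSet (Msec e M) := isCov_Msub hM _

lemma Msec_comm (e f : E) (M : Set (E → SignType)) :
    Msec f (Msec e M) = Msec e (Msec f M) := by
  simp only [Msec, Msub_Msub, inter_comm]

lemma gr_Msec_subset (e : E) (M : Set (E → SignType)) :
    gr (Msec e M) ⊆ gr M \ {e} := by
  rintro f ⟨X, hX, hf⟩
  rw [mem_Msec] at hX
  refine ⟨⟨X, hX.1, hf⟩, ?_⟩
  simp only [mem_singleton_iff]
  rintro rfl
  exact hf hX.2

/-- deletion of a coordinate -/
def mdel (f : E) (M : Set (E → SignType)) : Set (E → SignType) :=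
  (fun X => Function.update X f 0) '' M

lemma upd_apply_ne {X : E → SignType} {f h : E} (hne : h ≠ f) :
    Function.update X f 0 h = X h := Function.update_of_ne hne 0 X

lemma upd_apply_self (X : E → SignType) (f : E) : Function.update X f 0 f = 0 :=
  Function.update_self f 0 X

lemma upd_zero (f : E) : Function.update (0 : E → SignType) f 0 = 0 := by
  funext h
  by_cases hh : h = f
  · subst hh; simp [upd_apply_self]
  · simp [upd_apply_ne hh]

lemma upd_neg (X : E → SignType) (f : E) :
    Function.update (-X) f 0 = -(Function.update X f 0) := by
  funext h
  by_cases hh : h = f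
  · subst hh; simp [upd_apply_self]
  · simp [upd_apply_ne hh]

lemma upd_covComp (X Y : E → SignType) (f : E) :
    Function.update (covComp X Y) f 0 =
    covComp (Function.update X f 0) (Function.update Y f 0) := by
  funext h
  by_cases hh : h = f
  · subst hh
    rw [upd_apply_self, covComp_apply_of_eq (upd_apply_self X h), upd_apply_self]
  · rw [upd_apply_ne hh]
    by_cases hX : X h = 0
    · rw [covComp_apply_of_eq hX, covComp_apply_of_eq (by rwa [upd_apply_ne hh]), upd_apply_ne hh]
    · rw [covComp_apply_of_ne hX, covComp_apply_of_ne (by rwa [upd_apply_ne hh]), upd_apply_ne hh]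

lemma covSep_upd (X Y : E → SignType) (f : E) :
    covSep (Function.update X f 0) (Function.update Y f 0) = covSep X Y \ {f} := by
  ext h
  by_cases hh : h = f
  · subst hh
    simp [covSep, upd_apply_self]
  · simp only [covSep, mem_setOf_eq, upd_apply_ne hh, mem_diff, mem_singleton_iff]
    tauto

lemma isCov_mdel {M : Set (E → SignType)} (hM : IsCovectorSet M) (f : E) :
    IsCovectorSet (mdel f M) := by
  obtain ⟨h0, hneg, hcomp, helim⟩ := hM
  refine ⟨⟨0, h0, upd_zero f⟩, ?_, ?_, ?_⟩
  · rintro _ ⟨X, hX, rfl⟩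
    exact ⟨-X, hneg X hX, upd_neg X f⟩
  · rintro _ ⟨X, hX, rfl⟩ _ ⟨Y, hY, rfl⟩
    exact ⟨covComp X Y, hcomp X hX Y hY, upd_covComp X Y f⟩
  · rintro _ ⟨X, hX, rfl⟩ _ ⟨Y, hY, rfl⟩ e he
    dsimp only at he ⊢
    rw [covSep_upd] at he
    obtain ⟨Z, hZ, hZe, hZf⟩ := helim X hX Y hY e he.1
    refine ⟨Function.update Z f 0, ⟨Z, hZ, rfl⟩, ?_, ?_⟩
    · rw [upd_apply_ne (by simpa using he.2)]
      exact hZe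
    · intro h hh
      rw [covSep_upd] at hh
      by_cases hhf : h = f
      · rw [hhf, upd_apply_self, ← upd_covComp, upd_apply_self]
      · have hns : h ∉ covSep X Y := fun hc => hh ⟨hc, by simpa using hhf⟩
        rw [upd_apply_ne hhf, ← upd_covComp, upd_apply_ne hhf, hZf h hns]

lemma gr_mdel_subset (f : E) (M : Set (E → SignType)) : gr (mdel f M) ⊆ gr M \ {f} := by
  rintro h ⟨_, ⟨X, hX, rfl⟩, hh⟩
  dsimp only at hh
  by_cases hhf : h = f
  · rw [hhf] at hh; exact absurd (upd_apply_self X f) hh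
  · rw [upd_apply_ne hhf] at hh
    exact ⟨⟨X, hX, hh⟩, by simpa using hhf⟩

end Constructions

section Transfer
variable [Fintype E]

/-- chains below X with supp X ⊆ S coincide in M and Msub S M -/
lemma strchain_Msub_iff {M : Set (E → SignType)} {S : Set E} {X : E → SignType}
    (hX : gsupp X ⊆ S) {c : ℕ → E → SignType} {k : ℕ} :
    StrChain M c k X ↔ StrChain (Msub S M) c k X := by
  constructor
  · intro h
    refine ⟨h.1, h.2.1, fun i hi => ⟨h.2.2.1 i hi, ?_⟩, h.2.2.2⟩
    have := strchain_le h i k hi le_rfl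
    rw [h.2.1] at this
    exact (gsupp_subset_of_le this).trans hX
  · intro h
    exact ⟨h.1, h.2.1, fun i hi => (h.2.2.1 i hi).1, h.2.2.2⟩

lemma covRank_Msub {M : Set (E → SignType)} {S : Set E} {X : E → SignType}
    (hX : gsupp X ⊆ S) : covRank (Msub S M) X = covRank M X := by
  unfold covRank
  congr 1
  ext k
  constructor
  · rintro ⟨c, hc⟩
    exact ⟨c, (strchain_Msub_iff hX).mpr hc⟩
  · rintro ⟨c, hc⟩
    exact ⟨c, (strchain_Msub_iff hX).mp hc⟩

lemma covrel_Msub_iff {M : Set (E → SignType)} {S : Set E} {u v : E → SignType}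
    (hv : gsupp v ⊆ S) (hu : covLE u v) :
    CovRel M u v ↔ CovRel (Msub S M) u v := by
  constructor
  · intro h
    refine ⟨⟨h.1, (gsupp_subset_of_le hu).trans hv⟩, ⟨h.2.1, hv⟩, h.2.2.1,
      fun w hw h1 h2 => h.2.2.2 w hw.1 h1 h2⟩
  · intro h
    refine ⟨h.1.1, h.2.1.1, h.2.2.1, fun w hw h1 h2 => ?_⟩
    exact h.2.2.2 w ⟨hw, (gsupp_subset_of_le h2.1).trans hv⟩ h1 h2

lemma satchain_Msub_iff {M : Set (E → SignType)} {S : Set E} {X : E → SignType}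
    (hX : gsupp X ⊆ S) {c : ℕ → E → SignType} {k : ℕ} :
    SatChain M c k X ↔ SatChain (Msub S M) c k X := by
  constructor
  · intro h
    have hstr := satchain_strchain h
    have hle : ∀ i, i ≤ k → covLE (c i) X := by
      intro i hi
      have := strchain_le hstr i k hi le_rfl
      rwa [h.2.1] at this
    refine ⟨h.1, h.2.1, fun i hi => ⟨h.2.2.1 i hi, (gsupp_subset_of_le (hle i hi)).trans hX⟩,
      fun i hi => ?_⟩
    have := h.2.2.2 i hi
    exact (covrel_Msub_iff ((gsupp_subset_of_le (hle (i+1) hi)).trans hX) this.2.2.1.1).mp this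
  · intro h
    have hstr := satchain_strchain h
    have hle : ∀ i, i ≤ k → covLE (c i) X := by
      intro i hi
      have := strchain_le hstr i k hi le_rfl
      rwa [h.2.1] at this
    refine ⟨h.1, h.2.1, fun i hi => (h.2.2.1 i hi).1, fun i hi => ?_⟩
    have := h.2.2.2 i hi
    exact (covrel_Msub_iff ((gsupp_subset_of_le (hle (i+1) hi)).trans hX) this.2.2.1.1).mpr this

end Transfer

section Package
variable [Fintype E]

/-- the master inductive package: gradedness, tope-rank uniformity, section heights -/
def Pack (M : Set (E → SignType)) : Prop :=
  (∀ X ∈ M, ∀ c k, SatChain M c k X → k = covRank M X) ∧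
  (∀ T T', IsTope M T → IsTope M T' → covRank M T = covRank M T') ∧
  (∀ g ∈ gr M, ∀ T T', IsTope M T → IsTope (Msec g M) T' →
    covRank (Msec g M) T' + 1 = covRank M T)

/-- parallel pair -/
def Par (M : Set (E → SignType)) (e f : E) : Prop :=
  e ≠ f ∧ e ∈ gr M ∧ f ∈ gr M ∧ ∀ X ∈ M, (X e = 0 ↔ X f = 0)

lemma updLE {X Y : E → SignType} (f : E) (h : covLE X Y) :
    covLE (Function.update X f 0) (Function.update Y f 0) := by
  intro h'
  by_cases hh : h' = f
  · subst hh; exact Or.inl (upd_apply_self X h')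
  · rw [upd_apply_ne hh, upd_apply_ne hh]; exact h h'

lemma upd_ne_par {M : Set (E → SignType)} {e f : E} (hpar : Par M e f) {X Y : E → SignType}
    (hX : X ∈ M) (hY : Y ∈ M) (h : covLT X Y) :
    Function.update X f 0 ≠ Function.update Y f 0 := by
  intro heq
  have hcoord : ∀ h', h' ≠ f → X h' = Y h' := by
    intro h' hh
    have := congrFun heq h'
    rwa [upd_apply_ne hh, upd_apply_ne hh] at this
  have hXf : X f ≠ Y f := by
    intro hf
    exact h.2 (funext fun h' => if hh : h' = f then by rw [hh, hf] else hcoord h' hh)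
  have hX0 : X f = 0 := by
    rcases h.1 f with h' | h'
    · exact h'
    · exact absurd h' hXf
  have hY0 : Y f ≠ 0 := fun h' => hXf (hX0.trans h'.symm)
  have hXe : X e = 0 := (hpar.2.2.2 X hX).mpr hX0
  have hYe : Y e ≠ 0 := fun h' => hY0 ((hpar.2.2.2 Y hY).mp h')
  exact hYe ((hcoord e hpar.1).symm.trans hXe)

lemma updLT_par {M : Set (E → SignType)} {e f : E} (hpar : Par M e f) {X Y : E → SignType}
    (hX : X ∈ M) (hY : Y ∈ M) (h : covLT X Y) :
    covLT (Function.update X f 0) (Function.update Y f 0) :=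
  ⟨updLE f h.1, upd_ne_par hpar hX hY h⟩

lemma mem_mdel {M : Set (E → SignType)} {f : E} {X : E → SignType} (hX : X ∈ M) :
    Function.update X f 0 ∈ mdel f M := ⟨X, hX, rfl⟩

/-- cover projection under a parallel element -/
lemma cover_proj_par {M : Set (E → SignType)} (hM : IsCovectorSet M) {e f : E}
    (hpar : Par M e f) {X Y : E → SignType} (h : CovRel M X Y) :
    CovRel (mdel f M) (Function.update X f 0) (Function.update Y f 0) := by
  obtain ⟨hXM, hYM, hXY, hnob⟩ := h
  refine ⟨mem_mdel hXM, mem_mdel hYM, updLT_par hpar hXM hYM hXY, ?_⟩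
  rintro _ ⟨W, hWM, rfl⟩ h1 h2
  dsimp only at h1 h2
  -- W' := covComp X W agrees with W off f and extends X
  set W' := covComp X W with hW'
  have hW'M : W' ∈ M := hM.2.2.1 X hXM W hWM
  have hc1 : ∀ h', h' ≠ f → W' h' = W h' := by
    intro h' hh
    by_cases hX0 : X h' = 0
    · rw [hW', covComp_apply_of_eq hX0]
    · rw [hW', covComp_apply_of_ne hX0]
      rcases h1.1 h' with hc | hc
      · exact absurd (by rwa [upd_apply_ne hh] at hc) hX0
      · rw [upd_apply_ne hh, upd_apply_ne hh] at hc
        exact hc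
  have hupdW' : Function.update W' f 0 = Function.update W f 0 := by
    funext h'
    by_cases hh : h' = f
    · rw [hh, upd_apply_self, upd_apply_self]
    · rw [upd_apply_ne hh, upd_apply_ne hh, hc1 h' hh]
  have hXleW' : covLE X W' := covLE_covComp_left X W
  have hW'offle : ∀ h', h' ≠ f → (W' h' = 0 ∨ W' h' = Y h') := by
    intro h' hh
    rw [hc1 h' hh]
    rcases h2.1 h' with hc | hc
    · rw [upd_apply_ne hh] at hc; exact Or.inl hc
    · rw [upd_apply_ne hh, upd_apply_ne hh] at hc; exact Or.inr hc
  have hXneW' : X ≠ W' := by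
    intro hXW
    apply h1.2
    rw [← hupdW', ← hXW]
  by_cases hA : W' f = 0 ∨ W' f = Y f
  · -- W' is strictly between X and Y in M
    refine hnob W' hW'M ⟨hXleW', hXneW'⟩ ⟨?_, ?_⟩
    · intro h'
      by_cases hh : h' = f
      · subst hh; exact hA
      · exact hW'offle h' hh
    · intro hWY
      apply h2.2
      rw [← hupdW', hWY]
  · push_neg at hA
    obtain ⟨hWf0, hWfY⟩ := hA
    by_cases hYf : Y f = 0
    · -- case C : parallel kills it
      have hW'e : W' e ≠ 0 := fun h' => hWf0 ((hpar.2.2.2 W' hW'M).mp h')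
      have : W' e = 0 := by
        rcases hW'offle e hpar.1 with hc | hc
        · exact hc
        · rw [hc]
          exact (hpar.2.2.2 Y hYM).mpr hYf
      exact hW'e this
    · -- case B : eliminate f between W' and Y; the result is (update Y f 0) ∈ M
      have hXf0 : X f = 0 := by
        rcases hXleW' f with hc | hc
        · exact hc
        · rcases hXY.1 f with hc' | hc'
          · exact hc'
          · exact absurd (hc.symm.trans hc') hWfY
      have hsepf : f ∈ covSep W' Y := ⟨hWf0, sign_opp hWf0 hYf hWfY⟩
      have hsep_sub : ∀ h', h' ∈ covSep W' Y → h' = f := by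
        intro h' hh
        by_contra hne
        obtain ⟨hne0, hopp⟩ := hh
        rcases hW'offle h' hne with hc | hc
        · exact hne0 hc
        · rw [hc] at hne0 hopp
          exact sign_opp' hne0 hopp
      obtain ⟨Z, hZM, hZf, hZval⟩ := hM.2.2.2 W' hW'M Y hYM f hsepf
      have hZeq : Z = Function.update Y f 0 := by
        funext h'
        by_cases hh : h' = f
        · rw [hh, upd_apply_self, hZf]
        · rw [upd_apply_ne hh, hZval h' (fun hc => hh (hsep_sub h' hc))]
          rcases hW'offle h' hh with hc | hc
          · rw [covComp_apply_of_eq hc]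
          · by_cases hc0 : W' h' = 0
            · rw [covComp_apply_of_eq hc0]
            · rw [covComp_apply_of_ne hc0, hc]
      rw [hZeq] at hZM
      refine hnob (Function.update Y f 0) hZM ⟨?_, ?_⟩ ⟨?_, ?_⟩
      · intro h'
        by_cases hh : h' = f
        · subst hh; exact Or.inl hXf0
        · rw [upd_apply_ne hh]; exact hXY.1 h'
      · intro hXeq
        have : Function.update X f 0 = Function.update Y f 0 := by
          rw [hXeq]
          funext h'
          by_cases hh : h' = f
          · rw [hh, upd_apply_self, upd_apply_self]
          · rw [upd_apply_ne hh, upd_apply_ne hh]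
        exact (covLT_trans h1 h2).2 this
      · intro h'
        by_cases hh : h' = f
        · subst hh; exact Or.inl (upd_apply_self Y h')
        · rw [upd_apply_ne hh]; exact Or.inr rfl
      · intro heq
        have := congrFun heq f
        rw [upd_apply_self] at this
        exact hYf this.symm

lemma upd_eq_self {X : E → SignType} {f : E} (h : X f = 0) : Function.update X f 0 = X := by
  funext h'
  by_cases hh : h' = f
  · rw [hh, upd_apply_self, h]
  · rw [upd_apply_ne hh]

lemma mdel_eq_self {N : Set (E → SignType)} {f : E} (h : ∀ X ∈ N, X f = 0) :
    mdel f N = N := by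
  ext Y
  constructor
  · rintro ⟨X, hX, rfl⟩
    dsimp only
    rwa [upd_eq_self (h X hX)]
  · intro hY
    exact ⟨Y, hY, upd_eq_self (h Y hY)⟩

lemma mdel_Msec {M : Set (E → SignType)} {g f : E} (hgf : g ≠ f) :
    mdel f (Msec g M) = Msec g (mdel f M) := by
  ext Y
  constructor
  · rintro ⟨X, hX, rfl⟩
    rw [mem_Msec] at hX
    rw [mem_Msec]
    dsimp only
    exact ⟨⟨X, hX.1, rfl⟩, by rw [upd_apply_ne hgf]; exact hX.2⟩
  · intro hY
    rw [mem_Msec] at hY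
    obtain ⟨⟨X, hX, rfl⟩, hYg⟩ := hY
    dsimp only at hYg ⊢
    rw [upd_apply_ne hgf] at hYg
    exact ⟨X, by rw [mem_Msec]; exact ⟨hX, hYg⟩, rfl⟩

lemma Msec_par_eq {M : Set (E → SignType)} {e f : E} (hpar : Par M e f) :
    Msec e M = Msec f M := by
  ext X
  rw [mem_Msec, mem_Msec]
  constructor
  · rintro ⟨hX, h0⟩
    exact ⟨hX, (hpar.2.2.2 X hX).mp h0⟩
  · rintro ⟨hX, h0⟩
    exact ⟨hX, (hpar.2.2.2 X hX).mpr h0⟩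

lemma Msec_e_mdel_par {M : Set (E → SignType)} {e f : E} (hpar : Par M e f) :
    Msec e (mdel f M) = Msec e M := by
  ext Y
  rw [mem_Msec, mem_Msec]
  constructor
  · rintro ⟨⟨X, hX, rfl⟩, hYe⟩
    dsimp only at hYe ⊢
    rw [upd_apply_ne hpar.1] at hYe
    have hXf : X f = 0 := (hpar.2.2.2 X hX).mp hYe
    rw [upd_eq_self hXf]
    exact ⟨hX, hYe⟩
  · rintro ⟨hX, hXe⟩
    have hXf : Y f = 0 := (hpar.2.2.2 Y hX).mp hXe
    exact ⟨⟨Y, hX, upd_eq_self hXf⟩, hXe⟩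

lemma mem_gr_mdel {M : Set (E → SignType)} {g f : E} (hgf : g ≠ f) (hg : g ∈ gr M) :
    g ∈ gr (mdel f M) := by
  obtain ⟨X, hX, hXg⟩ := hg
  exact ⟨Function.update X f 0, mem_mdel hX, by rwa [upd_apply_ne hgf]⟩

lemma tope_mdel {M : Set (E → SignType)} (hM : IsCovectorSet M) {T : E → SignType}
    (hT : IsTope M T) (f : E) : IsTope (mdel f M) (Function.update T f 0) := by
  refine tope_of_full (mem_mdel hT.1) ?_
  intro h hh
  have h2 := gr_mdel_subset f M hh
  rw [upd_apply_ne (by simpa using h2.2)]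
  exact tope_full hM hT h h2.1

lemma satchain_proj_par {M : Set (E → SignType)} (hM : IsCovectorSet M) {e f : E}
    (hpar : Par M e f) {c : ℕ → E → SignType} {k : ℕ} {X : E → SignType}
    (hc : SatChain M c k X) :
    SatChain (mdel f M) (fun i => Function.update (c i) f 0) k (Function.update X f 0) := by
  refine ⟨by dsimp only; rw [hc.1, upd_zero], by dsimp only; rw [hc.2.1],
    fun i hi => mem_mdel (hc.2.2.1 i hi),
    fun i hi => cover_proj_par hM hpar (hc.2.2.2 i hi)⟩

lemma strchain_proj_par {M : Set (E → SignType)} {e f : E}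
    (hpar : Par M e f) {c : ℕ → E → SignType} {k : ℕ} {X : E → SignType}
    (hc : StrChain M c k X) :
    StrChain (mdel f M) (fun i => Function.update (c i) f 0) k (Function.update X f 0) := by
  refine ⟨by dsimp only; rw [hc.1, upd_zero], by dsimp only; rw [hc.2.1],
    fun i hi => mem_mdel (hc.2.2.1 i hi),
    fun i hi => updLT_par hpar (hc.2.2.1 i (by omega)) (hc.2.2.1 (i+1) (by omega))
      (hc.2.2.2 i hi)⟩

lemma covRank_mdel_par {M : Set (E → SignType)} (hM : IsCovectorSet M) {e f : E}
    (hpar : Par M e f) (hP : Pack (mdel f M)) {X : E → SignType} (hX : X ∈ M) :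
    covRank M X = covRank (mdel f M) (Function.update X f 0) := by
  apply le_antisymm
  · obtain ⟨c, hc⟩ := exists_strchain_rank hM.1 hX
    exact le_covRank (strchain_proj_par hpar hc)
  · obtain ⟨c, k, hc⟩ := exists_satchain hM.1 hX
    have h1 : k = covRank (mdel f M) (Function.update X f 0) :=
      hP.1 _ (mem_mdel hX) _ k (satchain_proj_par hM hpar hc)
    rw [← h1]
    exact le_covRank (satchain_strchain hc)

lemma pack_par {M : Set (E → SignType)} (hM : IsCovectorSet M) {e f : E} (hpar : Par M e f)
    (IH : ∀ M' : Set (E → SignType), IsCovectorSet M' → (gr M').ncard < (gr M).ncard →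
      Pack M') : Pack M := by
  have hdel : IsCovectorSet (mdel f M) := isCov_mdel hM f
  have hmeas : (gr (mdel f M)).ncard < (gr M).ncard := by
    apply Set.ncard_lt_ncard _ (Set.toFinite _)
    refine ⟨(gr_mdel_subset f M).trans diff_subset, fun hsub => ?_⟩
    have := gr_mdel_subset f M (hsub hpar.2.2.1)
    simp at this
  have hP : Pack (mdel f M) := IH _ hdel hmeas
  have hrank : ∀ X ∈ M, covRank M X = covRank (mdel f M) (Function.update X f 0) :=
    fun X hX => covRank_mdel_par hM hpar hP hX
  refine ⟨?_, ?_, ?_⟩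
  · intro X hX c k hc
    rw [hrank X hX]
    exact hP.1 _ (mem_mdel hX) _ k (satchain_proj_par hM hpar hc)
  · intro T T' hT hT'
    rw [hrank T hT.1, hrank T' hT'.1]
    exact hP.2.1 _ _ (tope_mdel hM hT f) (tope_mdel hM hT' f)
  · intro g hg T T' hT hT'
    rw [hrank T hT.1]
    by_cases hgef : g = e ∨ g = f
    · -- reduce to the section at e of mdel f M
      have hsec_eq : Msec g M = Msec e (mdel f M) := by
        rcases hgef with h | h
        · rw [h, Msec_e_mdel_par hpar]
        · rw [h, ← Msec_par_eq hpar, Msec_e_mdel_par hpar]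
      rw [hsec_eq] at hT' ⊢
      exact hP.2.2 e (mem_gr_mdel hpar.1 hpar.2.1) _ _ (tope_mdel hM hT f) hT'
    · push_neg at hgef
      obtain ⟨hge, hgf⟩ := hgef
      by_cases hNf : ∀ X ∈ Msec g M, X f = 0
      · have hsec_eq : Msec g M = Msec g (mdel f M) := by
          rw [← mdel_Msec hgf, mdel_eq_self hNf]
        rw [hsec_eq] at hT' ⊢
        exact hP.2.2 g (mem_gr_mdel hgf hg) _ _ (tope_mdel hM hT f) hT'
      · push_neg at hNf
        obtain ⟨X₀, hX₀, hX₀f⟩ := hNf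
        set N := Msec g M with hN
        have hNcov : IsCovectorSet N := isCov_Msec hM g
        have hparN : Par N e f := by
          refine ⟨hpar.1, ?_, ⟨X₀, hX₀, hX₀f⟩, fun X hX => hpar.2.2.2 X (mem_Msec.mp hX).1⟩
          refine ⟨X₀, hX₀, fun h0 => hX₀f ((hpar.2.2.2 X₀ (mem_Msec.mp hX₀).1).mp h0)⟩
        have hmeasN : (gr (mdel f N)).ncard < (gr M).ncard := by
          apply Set.ncard_lt_ncard _ (Set.toFinite _)
          refine ⟨?_, fun hsub => ?_⟩
          · intro h hh
            have := gr_mdel_subset f N hh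
            exact ((gr_Msec_subset g M).trans diff_subset) this.1
          · have hgin := hsub hg
            have := gr_mdel_subset f N hgin
            have := (gr_Msec_subset g M) this.1
            simp at this
        have hPN : Pack (mdel f N) := IH _ (isCov_mdel hNcov f) hmeasN
        have h1 : covRank N T' = covRank (mdel f N) (Function.update T' f 0) :=
          covRank_mdel_par hNcov hparN hPN hT'.1
        have h2 : IsTope (mdel f N) (Function.update T' f 0) := tope_mdel hNcov hT' f
        rw [mdel_Msec hgf] at h1 h2
        rw [h1]
        exact hP.2.2 g (mem_gr_mdel hgf hg) _ _ (tope_mdel hM hT f) h2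

lemma sign_eq_or_neg {a b : SignType} (ha : a ≠ 0) (hb : b ≠ 0) : a = b ∨ a = -b := by
  cases a <;> cases b <;> simp_all <;> decide

/-- loop-freeness of sections in simple covector sets -/
lemma gr_Msec_simple {M : Set (E → SignType)} (hM : IsCovectorSet M)
    (hsimple : ∀ e ∈ gr M, ∀ f ∈ gr M, e ≠ f → ∃ X ∈ M, ¬(X e = 0 ↔ X f = 0))
    {e : E} (he : e ∈ gr M) : gr (Msec e M) = gr M \ {e} := by
  refine subset_antisymm (gr_Msec_subset e M) ?_
  rintro f ⟨hf, hfe⟩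
  have hfe' : f ≠ e := by simpa using hfe
  obtain ⟨Y, hY, hYiff⟩ := hsimple e he f hf (Ne.symm hfe')
  by_cases hYe : Y e = 0
  · have hYf : Y f ≠ 0 := fun h => hYiff ⟨fun _ => h, fun _ => hYe⟩
    exact ⟨Y, mem_Msec.mpr ⟨hY, hYe⟩, hYf⟩
  · have hYf : Y f = 0 := by
      by_contra hYf
      exact hYiff ⟨fun h => absurd h hYe, fun h => absurd h hYf⟩
    obtain ⟨T, hT, -⟩ := exists_tope_above hM.1
    have hTe : T e ≠ 0 := tope_full hM hT e he
    have hTf : T f ≠ 0 := tope_full hM hT f hf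
    -- pick T* ∈ {T, -T} with T* e = -Y e
    obtain ⟨T', hT'M, hT'e, hT'f⟩ : ∃ T' ∈ M, T' e = -Y e ∧ T' f ≠ 0 := by
      rcases sign_eq_or_neg hTe hYe with h | h
      · refine ⟨-T, hM.2.1 T hT.1, ?_, ?_⟩
        · show -(T e) = -Y e
          rw [h]
        · show -(T f) ≠ 0
          simpa [sign_neg_zero] using hTf
      · exact ⟨T, hT.1, h, hTf⟩
    have hsep : e ∈ covSep Y T' := by
      refine ⟨hYe, ?_⟩
      rw [hT'e, neg_neg]
    obtain ⟨Z, hZM, hZe, hZval⟩ := hM.2.2.2 Y hY T' hT'M e hsep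
    have hZf : Z f ≠ 0 := by
      rw [hZval f (not_mem_covSep_of_zero hYf), covComp_apply_of_eq hYf]
      exact hT'f
    exact ⟨Z, mem_Msec.mpr ⟨hZM, hZe⟩, hZf⟩

/-- key sep-minimization: no coatom of a tope has two zeros (on the ground set) -/
lemma coatom_aux {M : Set (E → SignType)} (hM : IsCovectorSet M) {x T : E → SignType}
    (hcov : CovRel M x T) (hT : IsTope M T) :
    ∀ k : ℕ, ∀ u ∈ M, covLE x u → u ≠ x → (∃ g ∈ gr M, u g = 0) →
      (covSep T u).ncard = k → False := by
  intro k
  induction k using Nat.strong_induction_on with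
  | _ k ih =>
    intro u huM hxu hux ⟨g, hgM, hug⟩ hk
    rcases Nat.eq_zero_or_pos k with hk0 | hkpos
    · -- empty separation: u is strictly between x and T
      subst hk0
      have hsep_empty : covSep T u = ∅ := by
        rwa [← Set.ncard_eq_zero (Set.toFinite _)]
      have huT : covLE u T := by
        intro h
        by_cases hu0 : u h = 0
        · exact Or.inl hu0
        · have hhM : h ∈ gr M := gsupp_subset_gr huM hu0
          have hTh : T h ≠ 0 := tope_full hM hT h hhM
          rcases sign_eq_or_neg hu0 hTh with hc | hc
          · exact Or.inr hc
          · exfalso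
            have : h ∈ covSep T u := ⟨hTh, by rw [hc, neg_neg]⟩
            rw [hsep_empty] at this
            exact this
      have huT' : u ≠ T := by
        intro h
        rw [h] at hug
        exact tope_full hM hT g hgM hug
      exact hcov.2.2.2 u huM ⟨hxu, Ne.symm hux⟩ ⟨huT, huT'⟩
    · obtain ⟨g', hg'⟩ := Set.nonempty_of_ncard_ne_zero (by omega : (covSep T u).ncard ≠ 0)
      obtain ⟨hTg', hTg'val⟩ := hg'
      have hg'M : g' ∈ gr M := gsupp_subset_gr hT.1 hTg'
      -- eliminate g' between u and T
      have hg'sep : g' ∈ covSep u T := covSep_symm ⟨hTg', hTg'val⟩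
      obtain ⟨Z, hZM, hZg', hZval⟩ := hM.2.2.2 u huM T hT.1 g' hg'sep
      have hxg : x g = 0 := by
        rcases hxu g with h | h
        · exact h
        · rw [h]; exact hug
      have hZg : Z g = 0 → False := by
        intro hZg
        rw [hZval g (not_mem_covSep_of_zero hug), covComp_apply_of_eq hug] at hZg
        exact tope_full hM hT g hgM hZg
      have hxZ : covLE x Z := by
        intro h
        by_cases hx0 : x h = 0
        · exact Or.inl hx0
        · have hxuh : u h = x h := by
            rcases hxu h with h' | h'
            · exact absurd h' hx0
            · exact h'.symm
          have hxTh : T h = x h := by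
            rcases hcov.2.2.1.1 h with h' | h'
            · exact absurd h' hx0
            · exact h'.symm
          have hns : h ∉ covSep u T := by
            rintro ⟨h1, h2⟩
            rw [hxuh, hxTh] at h2
            exact sign_opp' hx0 h2
          rw [hZval h hns, covComp_apply_of_ne (by rw [hxuh]; exact hx0), hxuh]
          exact Or.inr rfl
      have hZx : Z ≠ x := by
        intro h
        apply hZg
        rw [h, hxg]
      have hsub : covSep T Z ⊆ covSep T u \ {g'} := by
        rintro h ⟨h1, h2⟩
        have hZh : Z h ≠ 0 := by
          intro h0
          rw [h0] at h2
          simp at h2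
          exact h1 h2
        have hhg' : h ≠ g' := fun hh => hZh (by rwa [hh])
        have hTu : T h = -u h := by
          by_contra hTu
          have hns : h ∉ covSep u T := by
            rintro ⟨hc1, hc2⟩
            exact hTu (by rw [hc2]; simp)
          rw [hZval h hns] at h2
          by_cases hu0 : u h = 0
          · rw [covComp_apply_of_eq hu0] at h2
            exact sign_opp' h1 h2
          · rw [covComp_apply_of_ne hu0] at h2
            exact hTu h2
        exact ⟨⟨h1, hTu⟩, by simpa using hhg'⟩
      have hlt : (covSep T Z).ncard < k := by
        have h1 : (covSep T Z).ncard ≤ (covSep T u \ {g'}).ncard :=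
          Set.ncard_le_ncard hsub (Set.toFinite _)
        have h2 : (covSep T u \ {g'}).ncard < (covSep T u).ncard := by
          apply Set.ncard_lt_ncard _ (Set.toFinite _)
          refine ⟨diff_subset, fun hs => ?_⟩
          have := hs ⟨hTg', hTg'val⟩
          simp at this
        omega
      exact ih _ hlt Z hZM hxZ hZx ⟨g', hg'M, hZg'⟩ rfl

/-- a coatom of a tope has exactly one zero on the ground set (simple case) -/
lemma coatom_z {M : Set (E → SignType)} (hM : IsCovectorSet M)
    (hsimple : ∀ e ∈ gr M, ∀ f ∈ gr M, e ≠ f → ∃ X ∈ M, ¬(X e = 0 ↔ X f = 0))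
    {x T : E → SignType} (hcov : CovRel M x T) (hT : IsTope M T) :
    ∃ e ∈ gr M, x e = 0 ∧ ∀ h ∈ gr M, h ≠ e → x h ≠ 0 := by
  have hex : ∃ e ∈ gr M, x e = 0 := by
    by_contra h
    push_neg at h
    have : IsTope M x := tope_of_full hcov.1 h
    exact hcov.2.2.1.2 (this.2 T hT.1 hcov.2.2.1.1).symm
  obtain ⟨e, heM, hxe⟩ := hex
  refine ⟨e, heM, hxe, fun f hfM hfe => ?_⟩
  by_contra hxf
  -- two zeros e ≠ f: contradiction via coatom_aux
  obtain ⟨Y, hY, hYiff⟩ := hsimple e heM f hfM (Ne.symm hfe)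
  obtain ⟨z, nz, hzM, hxz, hxnz, hYz, hYnz⟩ :
      ∃ z nz, z ∈ gr M ∧ x z = 0 ∧ x nz = 0 ∧ Y z = 0 ∧ Y nz ≠ 0 := by
    by_cases hYe : Y e = 0
    · exact ⟨e, f, heM, hxe, hxf, hYe, fun h => hYiff ⟨fun _ => h, fun _ => hYe⟩⟩
    · have hYf : Y f = 0 := by
        by_contra hYf
        exact hYiff ⟨fun h => absurd h hYe, fun h => absurd h hYf⟩
      exact ⟨f, e, hfM, hxf, hxe, hYf, hYe⟩
  set u := covComp x Y with hu
  have huM : u ∈ M := hM.2.2.1 x hcov.1 Y hY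
  have hxu : covLE x u := covLE_covComp_left x Y
  have hux : u ≠ x := by
    intro h
    have : u nz = x nz := by rw [h]
    rw [hu, covComp_apply_of_eq hxnz, hxnz] at this
    exact hYnz this
  have huz : u z = 0 := by
    rw [hu, covComp_apply_of_eq hxz, hYz]
  exact coatom_aux hM hcov hT _ u huM hxu hux ⟨z, hzM, huz⟩ rfl

lemma pack_empty {M : Set (E → SignType)} (hM : IsCovectorSet M) (h : gr M = ∅) : Pack M := by
  have hall : ∀ X ∈ M, X = (0 : E → SignType) := by
    intro X hX
    funext e
    by_contra he
    have : e ∈ gr M := ⟨X, hX, he⟩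
    rw [h] at this
    exact this
  refine ⟨?_, ?_, ?_⟩
  · intro X hX c k hc
    have hk : k = 0 := by
      by_contra hk
      have h1 := hc.2.2.2 0 (by omega)
      have := h1.2.2.1.2
      rw [hall (c 0) (hc.2.2.1 0 (by omega)), hall (c 1) (hc.2.2.1 1 (by omega))] at this
      exact this rfl
    subst hk
    rw [hall X hX, covRank_zero hM.1]
  · intro T T' hT hT'
    rw [hall T hT.1, hall T' hT'.1]
  · intro g hg
    rw [h] at hg
    exact absurd hg (notMem_empty g)

lemma pack_simple {M : Set (E → SignType)} (hM : IsCovectorSet M)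
    (hsimple : ∀ e ∈ gr M, ∀ f ∈ gr M, e ≠ f → ∃ X ∈ M, ¬(X e = 0 ↔ X f = 0))
    (hne : (gr M).Nonempty)
    (IH : ∀ M' : Set (E → SignType), IsCovectorSet M' → (gr M').ncard < (gr M).ncard →
      Pack M') : Pack M := by
  have hPsec : ∀ e ∈ gr M, Pack (Msec e M) := by
    intro e he
    refine IH _ (isCov_Msec hM e) ?_
    apply Set.ncard_lt_ncard _ (Set.toFinite _)
    refine ⟨(gr_Msec_subset e M).trans diff_subset, fun hs => ?_⟩
    have := gr_Msec_subset e M (hs he)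
    simp at this
  have hsupp : ∀ (x : E → SignType) (e : E), x e = 0 → gsupp x ⊆ {e}ᶜ := by
    intro x e hxe h hh
    simp only [mem_compl_iff, mem_singleton_iff]
    rintro rfl
    exact hh hxe
  have htrans : ∀ (e : E), ∀ x ∈ M, x e = 0 → covRank (Msec e M) x = covRank M x := by
    intro e x _ hxe
    exact covRank_Msub (hsupp x e hxe)
  have hNsec : ∀ e ∈ gr M, ∀ f ∈ gr M, ∀ Se Sf, IsTope (Msec e M) Se → IsTope (Msec f M) Sf →
      covRank (Msec e M) Se = covRank (Msec f M) Sf := by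
    intro e he f hf Se Sf hSe hSf
    by_cases hef : e = f
    · subst hef
      exact (hPsec e he).2.1 _ _ hSe hSf
    · obtain ⟨W, hW, -⟩ :=
        exists_tope_above (M := Msec f (Msec e M)) (isCov_Msec (isCov_Msec hM e) f).1
      have hfin : f ∈ gr (Msec e M) := by
        rw [gr_Msec_simple hM hsimple he]
        exact ⟨hf, by simpa using Ne.symm hef⟩
      have hein : e ∈ gr (Msec f M) := by
        rw [gr_Msec_simple hM hsimple hf]
        exact ⟨he, by simpa using hef⟩
      have h1 := (hPsec e he).2.2 f hfin Se W hSe hW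
      have hW' : IsTope (Msec e (Msec f M)) W := by
        rw [← Msec_comm]
        exact hW
      have h2 := (hPsec f hf).2.2 e hein Sf W hSf hW'
      have h3 : covRank (Msec f (Msec e M)) W = covRank (Msec e (Msec f M)) W := by
        rw [Msec_comm]
      omega
  obtain ⟨e₀, he₀⟩ := hne
  obtain ⟨S₀, hS₀, -⟩ := exists_tope_above (M := Msec e₀ M) (isCov_Msec hM e₀).1
  set N := covRank (Msec e₀ M) S₀ with hN
  -- coatoms of topes have rank N, and their saturated chains have length N
  have hcoat : ∀ x T, CovRel M x T → IsTope M T →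
      covRank M x = N ∧ ∀ c m, SatChain M c m x → m = N := by
    intro x T hcov hT
    obtain ⟨e, heM, hxe, hfull⟩ := coatom_z hM hsimple hcov hT
    have hxsec : x ∈ Msec e M := mem_Msec.mpr ⟨hcov.1, hxe⟩
    have hxtope : IsTope (Msec e M) x := by
      refine tope_of_full hxsec ?_
      intro h hh
      have := gr_Msec_subset e M hh
      exact hfull h this.1 (by simpa using this.2)
    have hrk : covRank (Msec e M) x = N := hNsec e heM e₀ he₀ x S₀ hxtope hS₀
    refine ⟨by rw [← htrans e x hcov.1 hxe, hrk], ?_⟩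
    intro c m hc
    have hc' : SatChain (Msec e M) c m x := (satchain_Msub_iff (hsupp x e hxe)).mp hc
    rw [(hPsec e heM).1 x hxsec c m hc', hrk]
  have hTopeSat : ∀ T, IsTope M T → ∀ c k, SatChain M c k T → k = N + 1 := by
    intro T hT c k hc
    have hT0 : T ≠ 0 := by
      intro h
      apply tope_full hM hT e₀ he₀
      rw [h]
      rfl
    have hk : k ≠ 0 := by
      rintro rfl
      exact hT0 (hc.2.1.symm.trans hc.1)
    obtain ⟨m, rfl⟩ : ∃ m, k = m + 1 := ⟨k - 1, by omega⟩
    have hrel : CovRel M (c m) T := by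
      have := hc.2.2.2 m (by omega)
      rwa [hc.2.1] at this
    have hpre : SatChain M c m (c m) :=
      ⟨hc.1, rfl, fun i hi => hc.2.2.1 i (by omega), fun i hi => hc.2.2.2 i (by omega)⟩
    have := (hcoat (c m) T hrel hT).2 c m hpre
    omega
  have hTopeRank : ∀ T, IsTope M T → covRank M T = N + 1 := by
    intro T hT
    obtain ⟨c, k, hc⟩ := exists_satchain hM.1 hT.1
    have hk := hTopeSat T hT c k hc
    apply le_antisymm
    · apply covRank_le hM.1 hT.1
      intro c' k' hc'
      obtain ⟨c'', k'', hk'', hc''⟩ := strchain_to_satchain k' c' T hc'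
      have := hTopeSat T hT c'' k'' hc''
      omega
    · rw [← hk]
      exact le_covRank (satchain_strchain hc)
  refine ⟨?_, ?_, ?_⟩
  · intro X hX c k hc
    by_cases hXt : IsTope M X
    · rw [hTopeSat X hXt c k hc, hTopeRank X hXt]
    · have hex : ∃ e ∈ gr M, X e = 0 := by
        by_contra h
        push_neg at h
        exact hXt (tope_of_full hX h)
      obtain ⟨e, heM, hXe⟩ := hex
      have hc' : SatChain (Msec e M) c k X := (satchain_Msub_iff (hsupp X e hXe)).mp hc
      rw [(hPsec e heM).1 X (mem_Msec.mpr ⟨hX, hXe⟩) c k hc', htrans e X hX hXe]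
  · intro T T' hT hT'
    rw [hTopeRank T hT, hTopeRank T' hT']
  · intro g hg T T' hT hT'
    rw [hTopeRank T hT, hNsec g hg e₀ he₀ T' S₀ hT' hS₀]

theorem pack_of_isCov : ∀ M : Set (E → SignType), IsCovectorSet M → Pack M := by
  have key : ∀ b : ℕ, ∀ M : Set (E → SignType), (gr M).ncard = b → IsCovectorSet M → Pack M := by
    intro b
    induction b using Nat.strong_induction_on with
    | _ b IH =>
      intro M hb hM
      have IH' : ∀ M' : Set (E → SignType), IsCovectorSet M' →
          (gr M').ncard < (gr M).ncard → Pack M' := by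
        intro M' h1 h2
        rw [hb] at h2
        exact IH _ h2 M' rfl h1
      rcases eq_empty_or_nonempty (gr M) with hemp | hne
      · exact pack_empty hM hemp
      by_cases hsimple : ∀ e ∈ gr M, ∀ f ∈ gr M, e ≠ f → ∃ X ∈ M, ¬(X e = 0 ↔ X f = 0)
      · exact pack_simple hM hsimple hne IH'
      · push_neg at hsimple
        obtain ⟨e, he, f, hf, hef, hiff⟩ := hsimple
        exact pack_par hM ⟨hef, he, hf, hiff⟩ IH'
  exact fun M hM => key _ M rfl hM

end Package

section Application
variable [Fintype E]

lemma sign_neg_inj {a b : SignType} (h : -a = -b) : a = b := by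
  cases a <;> cases b <;> simp_all <;> exact h.symm

lemma covSep_comm (X Y : E → SignType) : covSep X Y = covSep Y X := by
  ext h
  exact ⟨fun hh => covSep_symm hh, fun hh => covSep_symm hh⟩

lemma satchain_snoc {M : Set (E → SignType)} {c k X Y} (h : SatChain M c k X)
    (hXY : CovRel M X Y) :
    SatChain M (fun i => if i ≤ k then c i else Y) (k+1) Y := by
  refine ⟨by simp [h.1], by simp, ?_, ?_⟩
  · intro i hi
    by_cases hik : i ≤ k
    · simpa [hik] using h.2.2.1 i hik
    · simpa [hik] using hXY.2.1
  · intro i hi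
    by_cases hik : i < k
    · simpa [Nat.le_of_lt hik, Nat.succ_le_of_lt hik] using h.2.2.2 i hik
    · have : i = k := by omega
      subst this
      simpa [Nat.not_succ_le_self, h.2.1] using hXY

lemma coatom_rank {L : Set (E → SignType)} (hL : IsCovectorSet L) (hP : Pack L)
    {V T : E → SignType} (hcov : CovRel L V T) : covRank L V + 1 = covRank L T := by
  obtain ⟨c, k, hc⟩ := exists_satchain hL.1 hcov.1
  have h1 : k = covRank L V := hP.1 V hcov.1 c k hc
  have h2 : k + 1 = covRank L T := hP.1 T hcov.2.1 _ (k+1) (satchain_snoc hc hcov)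
  omega

lemma rank_n_tope {L : Set (E → SignType)} (hL : IsCovectorSet L) {n : ℕ}
    (hrank : ∀ X ∈ L, covRank L X ≤ n) {X : E → SignType} (hX : X ∈ L)
    (hXn : covRank L X = n) : IsTope L X := by
  refine ⟨hX, fun Y hY hle => ?_⟩
  by_contra hne
  have := covRank_lt_of_covLT hL.1 hX hY ⟨hle, fun h => hne h.symm⟩
  have := hrank Y hY
  omega

/-- wall existence toward another tope -/
lemma wall_exists {L : Set (E → SignType)} (hL : IsCovectorSet L) {T T' : E → SignType}
    (hfT : ∀ e, T e ≠ 0) (hfT' : ∀ e, T' e ≠ 0) (hTL : T ∈ L) (hT'L : T' ∈ L)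
    (hne : T ≠ T') :
    ∃ V ∈ L, covLE V T ∧ V ≠ T ∧ ∀ h, h ∉ covSep T T' → V h = T h := by
  have hoffS : ∀ h, h ∉ covSep T T' → T h = T' h := by
    intro h hh
    rcases sign_eq_or_neg (hfT h) (hfT' h) with hc | hc
    · exact hc
    · exact absurd ⟨hfT h, hc⟩ hh
  -- main recursion on the separation of Z from T
  have main : ∀ s : ℕ, ∀ Z ∈ L, (∀ h, h ∉ covSep T T' → Z h = T h) → (∃ h₀, Z h₀ = 0) →
      (covSep Z T).ncard = s →
      ∃ V ∈ L, covLE V T ∧ V ≠ T ∧ ∀ h, h ∉ covSep T T' → V h = T h := by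
    intro s
    induction s using Nat.strong_induction_on with
    | _ s ih =>
      intro Z hZL hZoff ⟨h₀, hh₀⟩ hs
      have hsepS : ∀ h ∈ covSep Z T, h ∈ covSep T T' := by
        intro h hh
        by_contra hc
        have heq := hZoff h hc
        obtain ⟨hh1, hh2⟩ := hh
        rw [heq] at hh2
        exact sign_opp' (hfT h) hh2
      rcases Nat.eq_zero_or_pos s with h0 | hpos
      · subst h0
        have hempty : covSep Z T = ∅ := by rwa [← Set.ncard_eq_zero (Set.toFinite _)]
        refine ⟨Z, hZL, ?_, ?_, hZoff⟩
        · intro h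
          by_cases hZh : Z h = 0
          · exact Or.inl hZh
          · rcases sign_eq_or_neg hZh (hfT h) with hc | hc
            · exact Or.inr hc
            · exact absurd (hempty ▸ (⟨hZh, hc⟩ : h ∈ covSep Z T)) (notMem_empty h)
        · intro h
          rw [h] at hh₀
          exact hfT h₀ hh₀
      · obtain ⟨f₀, hf₀⟩ := Set.nonempty_of_ncard_ne_zero (by omega : (covSep Z T).ncard ≠ 0)
        obtain ⟨Z₂, hZ₂L, hZ₂f₀, hZ₂val⟩ := hL.2.2.2 Z hZL T hTL f₀ hf₀
        have hZ₂off : ∀ h, h ∉ covSep T T' → Z₂ h = T h := by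
          intro h hh
          have hns : h ∉ covSep Z T := fun hc => hh (hsepS h hc)
          rw [hZ₂val h hns]
          by_cases hZh : Z h = 0
          · rw [covComp_apply_of_eq hZh]
          · rw [covComp_apply_of_ne hZh]
            exact hZoff h hh
        have hsub : covSep Z₂ T ⊆ covSep Z T \ {f₀} := by
          rintro h ⟨h1, h2⟩
          have hne' : h ≠ f₀ := by
            intro hh
            rw [hh, hZ₂f₀] at h1
            exact h1 rfl
          refine ⟨?_, by simpa using hne'⟩
          by_contra hc
          rw [hZ₂val h hc] at h1 h2
          by_cases hZh : Z h = 0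
          · rw [covComp_apply_of_eq hZh] at h2
            exact sign_opp' (hfT h) (by rw [← h2])
          · rw [covComp_apply_of_ne hZh] at h2
            exact hc ⟨hZh, h2⟩
        have hlt : (covSep Z₂ T).ncard < s := by
          have h1 : (covSep Z₂ T).ncard ≤ (covSep Z T \ {f₀}).ncard :=
            Set.ncard_le_ncard hsub (Set.toFinite _)
          have h2 : (covSep Z T \ {f₀}).ncard < (covSep Z T).ncard := by
            apply Set.ncard_lt_ncard _ (Set.toFinite _)
            refine ⟨diff_subset, fun hss => ?_⟩
            have := hss hf₀
            simp at this
          omega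
        exact ih _ hlt Z₂ hZ₂L hZ₂off ⟨f₀, hZ₂f₀⟩ rfl
  -- initial covector from elimination between T' and T
  obtain ⟨e₀, he₀⟩ : (covSep T T').Nonempty := by
    have : ∃ h, T h ≠ T' h := by
      by_contra hc
      push_neg at hc
      exact hne (funext hc)
    obtain ⟨h, hh⟩ := this
    exact ⟨h, hfT h, sign_opp (hfT h) (hfT' h) hh⟩
  obtain ⟨Z, hZL, hZe₀, hZval⟩ := hL.2.2.2 T' hT'L T hTL e₀ (covSep_symm he₀)
  refine main _ Z hZL ?_ ⟨e₀, hZe₀⟩ rfl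
  intro h hh
  have hns : h ∉ covSep T' T := by rw [covSep_comm]; exact hh
  rw [hZval h hns, covComp_apply_of_ne (hfT' h)]
  exact (hoffS h hh).symm

lemma wall_coatom {L : Set (E → SignType)} (hL : IsCovectorSet L) {T T' : E → SignType}
    (hfT : ∀ e, T e ≠ 0) (hfT' : ∀ e, T' e ≠ 0) (hTL : T ∈ L) (hT'L : T' ∈ L)
    (hne : T ≠ T') :
    ∃ V, CovRel L V T ∧ ∀ h, h ∉ covSep T T' → V h = T h := by
  obtain ⟨V₀, hV₀L, hV₀le, hV₀ne, hV₀off⟩ := wall_exists hL hfT hfT' hTL hT'L hne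
  obtain ⟨V, hV, hVmax⟩ := exists_cov_maximal
    (⟨V₀, ⟨hV₀L, hV₀le, hV₀ne, hV₀off⟩⟩ :
      {V | V ∈ L ∧ covLE V T ∧ V ≠ T ∧ ∀ h, h ∉ covSep T T' → V h = T h}.Nonempty)
  obtain ⟨hVL, hVle, hVne, hVoff⟩ := hV
  refine ⟨V, ⟨hVL, hTL, ⟨hVle, hVne⟩, ?_⟩, hVoff⟩
  intro w hw h1 h2
  refine hVmax w ⟨hw, h2.1, h2.2, ?_⟩ h1
  intro h hh
  have := hVoff h hh
  rcases h1.1 h with hc | hc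
  · exact absurd hc (by rw [this]; exact hfT h)
  · rw [← hc, this]

lemma grpath_cons {L : Set (E → SignType)} {n : ℕ} {γ k A B X}
    (h : GrPath L n γ k A B) (hX : InGr L n X)
    (hedge : covLT X A ∨ covLT A X) :
    GrPath L n (fun i => if i = 0 then X else γ (i-1)) (k+1) X B := by
  refine ⟨by simp, by simp [h.2.1], ?_, ?_⟩
  · intro i hi
    by_cases hi0 : i = 0
    · simpa [hi0] using hX
    · simpa [hi0] using h.2.2.1 (i-1) (by omega)
  · intro i hi
    by_cases hi0 : i = 0
    · subst hi0
      simpa [h.1] using hedge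
    · have h1 : i - 1 < k := by omega
      have := h.2.2.2 (i-1) h1
      have he1 : i - 1 + 1 = i := by omega
      rw [he1] at this
      simpa [hi0] using this

lemma grpath_snoc {L : Set (E → SignType)} {n : ℕ} {γ k A B Y}
    (h : GrPath L n γ k A B) (hY : InGr L n Y)
    (hedge : covLT B Y ∨ covLT Y B) :
    GrPath L n (fun i => if i ≤ k then γ i else Y) (k+1) A Y := by
  refine ⟨by simp [h.1], by simp, ?_, ?_⟩
  · intro i hi
    by_cases hik : i ≤ k
    · simpa [hik] using h.2.2.1 i hik
    · simpa [hik] using hY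
  · intro i hi
    by_cases hik : i < k
    · simpa [Nat.le_of_lt hik, Nat.succ_le_of_lt hik] using h.2.2.2 i hik
    · have : i = k := by omega
      subst this
      simpa [Nat.not_succ_le_self, h.2.1] using hedge

/-- connectivity of topes through walls of rank n-1 -/
lemma tope_path {L : Set (E → SignType)} (hL : IsCovectorSet L) (hP : Pack L) {n : ℕ}
    (hfull : ∀ T, IsTope L T → ∀ e, T e ≠ 0)
    (htn : ∀ T, IsTope L T → covRank L T = n) :
    ∀ s : ℕ, ∀ T T', IsTope L T → IsTope L T' → (covSep T T').ncard = s →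
      ∃ γ k, GrPath L n γ k T T' := by
  intro s
  induction s using Nat.strong_induction_on with
  | _ s ih =>
    intro T T' hT hT' hs
    have hInT : InGr L n T := ⟨hT.1, Or.inr (htn T hT)⟩
    by_cases hne : T = T'
    · subst hne
      exact ⟨fun _ => T, 0, rfl, rfl, fun i hi => by simpa [Nat.le_zero.mp hi] using hInT,
        fun i hi => absurd hi (by omega)⟩
    · obtain ⟨V, hVcov, hVoff⟩ :=
        wall_coatom hL (hfull T hT) (hfull T' hT') hT.1 hT'.1 hne
      have hVrank : covRank L V + 1 = n := by
        rw [← htn T hT]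
        exact coatom_rank hL hP hVcov
      have hInV : InGr L n V := ⟨hVcov.1, Or.inl (by omega)⟩
      -- a zero coordinate of V
      obtain ⟨e₀, he₀⟩ : ∃ e₀, V e₀ = 0 := by
        by_contra hc
        push_neg at hc
        exact hVcov.2.2.1.2 (eq_of_le_of_supp_le hVcov.2.2.1.1 (fun h _ => hc h))
      have he₀S : e₀ ∈ covSep T T' := by
        by_contra hc
        have := hVoff e₀ hc
        rw [he₀] at this
        exact hfull T hT e₀ this.symm
      -- the opposite tope across the wall V
      set T₁ := covComp V (-T) with hT₁
      have hT₁L : T₁ ∈ L := hL.2.2.1 V hVcov.1 (-T) (hL.2.1 T hT.1)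
      have hT₁full : ∀ e, T₁ e ≠ 0 := by
        intro e
        by_cases hVe : V e = 0
        · rw [hT₁, covComp_apply_of_eq hVe]
          show ¬ (-(T e) = 0)
          rw [sign_neg_zero]
          exact hfull T hT e
        · rw [hT₁, covComp_apply_of_ne hVe]
          exact hVe
      have hT₁tope : IsTope L T₁ := tope_of_full hT₁L (fun e _ => hT₁full e)
      have hVleT₁ : covLT V T₁ := by
        refine ⟨covLE_covComp_left V (-T), fun h => ?_⟩
        have : V e₀ = T₁ e₀ := by rw [h]
        rw [he₀, hT₁, covComp_apply_of_eq he₀] at this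
        exact hfull T hT e₀ ((sign_neg_zero (T e₀)).mp this.symm)
      have hsub : covSep T₁ T' ⊆ covSep T T' \ {e₀} := by
        rintro h ⟨h1, h2⟩
        by_cases hVh : V h = 0
        · exfalso
          -- h has V h = 0, so h ∈ S and T₁ h = -T h = T' h, contradiction with h2
          have hhS : h ∈ covSep T T' := by
            by_contra hc
            have := hVoff h hc
            rw [hVh] at this
            exact hfull T hT h this.symm
          have hTh : T h = -T' h := hhS.2
          rw [hT₁, covComp_apply_of_eq hVh] at h2
          have : T h = T' h := sign_neg_inj h2
          rw [this] at hTh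
          exact sign_opp' (hfull T' hT' h) hTh
        · have hT₁h : T₁ h = V h := by rw [hT₁, covComp_apply_of_ne hVh]
          have hVT : V h = T h := by
            rcases hVcov.2.2.1.1 h with hc | hc
            · exact absurd hc hVh
            · exact hc
          refine ⟨⟨?_, ?_⟩, ?_⟩
          · rw [← hVT]; exact hVh
          · rw [← hVT, ← hT₁h]; exact h2
          · simp only [mem_singleton_iff]
            rintro rfl
            exact hVh he₀
      have hlt : (covSep T₁ T').ncard < s := by
        have h1 : (covSep T₁ T').ncard ≤ (covSep T T' \ {e₀}).ncard :=
          Set.ncard_le_ncard hsub (Set.toFinite _)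
        have h2 : (covSep T T' \ {e₀}).ncard < (covSep T T').ncard := by
          apply Set.ncard_lt_ncard _ (Set.toFinite _)
          refine ⟨diff_subset, fun hss => ?_⟩
          have := hss he₀S
          simp at this
        omega
      obtain ⟨γ', k', hγ'⟩ := ih _ hlt T₁ T' hT₁tope hT' rfl
      have hpath1 := grpath_cons hγ' hInV (Or.inl hVleT₁)
      have hpath2 := grpath_cons hpath1 hInT (Or.inr hVcov.2.2.1)
      exact ⟨_, _, hpath2⟩

end Application
end OMAux


/-- for a loop-free oriented matroid of rank `n`, if `P` is an order ideal
generated by covectors of full rank `n` satisfying the shortest-path condition, then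
`P ∩ {X : rank(X) ∈ {n-1, n}}` is connected. -/
theorem om_ideal_connected {E : Type*} [Fintype E] (n : ℕ)
    (L : Set (E → SignType)) (hL : IsCovectorSet L) (hloop : LoopFree L)
    (hrank : ∀ X ∈ L, covRank L X ≤ n)
    (htope : ∀ X ∈ L, (∀ Y ∈ L, covLE X Y → Y = X) → covRank L X = n)
    (P : Set (E → SignType)) (hPL : P ⊆ L)
    (hideal : ∀ X ∈ P, ∀ Y ∈ L, covLE Y X → Y ∈ P)
    (hgen : ∀ X ∈ P, ∃ Y ∈ P, covRank L Y = n ∧ covLE X Y)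
    (hshort : ∀ Y ∈ P, ∀ Z ∈ P, covRank L Y = n → covRank L Z = n →
      ∀ γ k, GrPath L n γ k Y Z → (∀ γ' k', GrPath L n γ' k' Y Z → k ≤ k') →
      ∀ i, i ≤ k → γ i ∈ P) :
    ∀ X ∈ P, ∀ Y ∈ P, InGr L n X → InGr L n Y →
      ∃ γ k, GrPath L n γ k X Y ∧ ∀ i, i ≤ k → γ i ∈ P := by
  classical
  intro X hX Y hY hXg hYg
  have hP : OMAux.Pack L := OMAux.pack_of_isCov L hL
  have htn : ∀ T, OMAux.IsTope L T → covRank L T = n := fun T hT => htope T hT.1 hT.2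
  have hfull : ∀ T, OMAux.IsTope L T → ∀ e, T e ≠ 0 := by
    intro T hT e
    obtain ⟨W, hW, hWe⟩ := hloop e
    exact OMAux.tope_full hL hT e ⟨W, hW, hWe⟩
  obtain ⟨TX, hTXP, hTXn, hXle⟩ := hgen X hX
  obtain ⟨TY, hTYP, hTYn, hYle⟩ := hgen Y hY
  have hTXtope : OMAux.IsTope L TX := OMAux.rank_n_tope hL hrank (hPL hTXP) hTXn
  have hTYtope : OMAux.IsTope L TY := OMAux.rank_n_tope hL hrank (hPL hTYP) hTYn
  obtain ⟨γ₁, k₁, hγ₁⟩ := OMAux.tope_path hL hP hfull htn _ TX TY hTXtope hTYtope rfl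
  set K := {k | ∃ γ, GrPath L n γ k TX TY} with hK
  have hKne : K.Nonempty := ⟨k₁, γ₁, hγ₁⟩
  obtain ⟨γ₀, hγ₀⟩ : ∃ γ, GrPath L n γ (sInf K) TX TY := Nat.sInf_mem hKne
  have hmin : ∀ γ' k', GrPath L n γ' k' TX TY → sInf K ≤ k' :=
    fun γ' k' h' => Nat.sInf_le ⟨γ', h'⟩
  have hPmem : ∀ i, i ≤ sInf K → γ₀ i ∈ P :=
    hshort TX hTXP TY hTYP hTXn hTYn γ₀ _ hγ₀ hmin
  -- step 1: a path from X to TY whose vertices are in P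
  obtain ⟨γ₂, k₂, hγ₂, hγ₂P⟩ :
      ∃ γ k, GrPath L n γ k X TY ∧ ∀ i, i ≤ k → γ i ∈ P := by
    by_cases hXeq : X = TX
    · exact ⟨γ₀, sInf K, by rw [hXeq]; exact hγ₀, hPmem⟩
    · refine ⟨_, _, OMAux.grpath_cons hγ₀ hXg (Or.inl ⟨hXle, hXeq⟩), ?_⟩
      intro i hi
      by_cases hi0 : i = 0
      · simpa [hi0] using hX
      · simpa [hi0] using hPmem (i-1) (by omega)
  -- step 2: append Y if needed
  by_cases hYeq : Y = TY
  · exact ⟨γ₂, k₂, by rw [hYeq]; exact hγ₂, hγ₂P⟩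
  · refine ⟨_, _, OMAux.grpath_snoc hγ₂ hYg (Or.inr ⟨hYle, hYeq⟩), ?_⟩
    intro i hi
    by_cases hik : i ≤ k₂
    · simpa [hik] using hγ₂P i hik
    · simpa [hik] using hY
end
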